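/- arXiv:1908.01337 — 7 statements merged into one kernel-verified Lean document; each statement's English description precedes it below -/
import Mathlib

section
/- Let Φ be an irreducible root system and let S ⊂ Φ be a set of pairwise strongly orthogonal roots (i.e., for any two distinct α, β ∈ S neither α+β nor α−β is a root). Then the intersection of the integer span ℤS with Φ equals S ∪ (−S). -/
/-
Replace `S` by `T = S ∪ -S`: then `ℤS` is the additive monoid generated by `T`, and no sum
`x + y` of two elements of `T` is a root (strong orthogonality, and reducedness for `x + x`).
If a root `γ` is a sum of elements of `T`, then `0 < ⟪γ, γ⟫` forces `0 < ⟪γ, x⟫` for some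
summand `x`. Unless `γ = x`, the root-string property makes `γ - x` a root with one summand
fewer, hence in `T` by induction, and `γ = x + (γ - x)` is a forbidden sum.
-/

open scoped Classical RealInnerProductSpace

/-- The pairing `⟨γ, α^∨⟩ = 2(γ,α)/(α,α)`. -/
noncomputable def pairing {V : Type*} [NormedAddCommGroup V] [InnerProductSpace ℝ V]
    (γ α : V) : ℝ :=
  2 * ⟪γ, α⟫ / ⟪α, α⟫

/-- A finite (crystallographic, reduced) root system in a Euclidean space. -/
structure IsRootSystem {V : Type*} [NormedAddCommGroup V] [InnerProductSpace ℝ V]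
    (Φ : Set V) : Prop where
  finite : Φ.Finite
  ne_zero : ∀ α ∈ Φ, α ≠ 0
  neg_mem : ∀ α ∈ Φ, -α ∈ Φ
  reflect_mem : ∀ α ∈ Φ, ∀ β ∈ Φ, β - pairing β α • α ∈ Φ
  crystal : ∀ α ∈ Φ, ∀ β ∈ Φ, ∃ n : ℤ, pairing β α = n
  reduced : ∀ α ∈ Φ, ∀ t : ℝ, t • α ∈ Φ → t = 1 ∨ t = -1

/-- Irreducibility of a root system: no nontrivial orthogonal decomposition. -/
def IsIrreducibleRS {V : Type*} [NormedAddCommGroup V] [InnerProductSpace ℝ V]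
    (Φ : Set V) : Prop :=
  ∀ Φ₁ Φ₂ : Set V, Φ = Φ₁ ∪ Φ₂ → (∀ α ∈ Φ₁, ∀ β ∈ Φ₂, ⟪α, β⟫ = 0) → Φ₁ = ∅ ∨ Φ₂ = ∅

/-- A set of roots is strongly orthogonal if for any two distinct elements neither the sum
nor the difference is a root. -/
def StronglyOrthogonal {V : Type*} [NormedAddCommGroup V] [InnerProductSpace ℝ V]
    (Φ : Set V) (S : Set V) : Prop :=
  ∀ α ∈ S, ∀ β ∈ S, α ≠ β → α + β ∉ Φ ∧ α - β ∉ Φ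

/-- A set of pairwise orthogonal vectors. -/
def OrthogonalSet {V : Type*} [NormedAddCommGroup V] [InnerProductSpace ℝ V]
    (S : Set V) : Prop :=
  ∀ α ∈ S, ∀ β ∈ S, α ≠ β → ⟪α, β⟫ = 0

lemma Submodule.coe_span_int_eq_addSubmonoidClosure {M : Type*} [AddCommGroup M] (s : Set M) :
    (Submodule.span ℤ s : Set M) = AddSubmonoid.closure (s ∪ -s) := by
  rw [← Submodule.coe_toAddSubgroup, Submodule.span_int_eq_addSubgroupClosure,
    ← AddSubgroup.coe_toAddSubmonoid, AddSubgroup.closure_toAddSubmonoid]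

lemma pairing_mul_pairing {V : Type*} [NormedAddCommGroup V] [InnerProductSpace ℝ V] (α β : V) :
    pairing α β * pairing β α = 4 * ⟪α, β⟫ ^ 2 / (⟪β, β⟫ * ⟪α, α⟫) := by
  unfold pairing
  rw [real_inner_comm β α, div_mul_div_comm]
  ring

namespace IsRootSystem

variable {V : Type*} [NormedAddCommGroup V] [InnerProductSpace ℝ V] {Φ : Set V}

lemma zero_notMem (hΦ : IsRootSystem Φ) : (0 : V) ∉ Φ := fun h => hΦ.ne_zero 0 h rfl

lemma two_smul_notMem (hΦ : IsRootSystem Φ) {α : V} (hα : α ∈ Φ) : (2 : ℝ) • α ∉ Φ := by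
  intro h
  rcases hΦ.reduced α hα 2 h with h | h <;> norm_num at h

lemma union_neg_subset (hΦ : IsRootSystem Φ) {S : Set V} (hSΦ : S ⊆ Φ) : S ∪ -S ⊆ Φ := by
  rintro x (hx | hx)
  · exact hSΦ hx
  · simpa using hΦ.neg_mem _ (hSΦ hx)

lemma inner_sq_lt_of_inner_pos (hΦ : IsRootSystem Φ) {α β : V} (hα : α ∈ Φ) (hβ : β ∈ Φ)
    (hne : α ≠ β) (hpos : 0 < ⟪α, β⟫) : ⟪α, β⟫ ^ 2 < ⟪α, α⟫ * ⟪β, β⟫ := by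
  have hβ0 : 0 < ‖β‖ := norm_pos_iff.2 (hΦ.ne_zero β hβ)
  have hlt : ⟪α, β⟫ < ‖α‖ * ‖β‖ := by
    refine (real_inner_le_norm α β).lt_of_ne fun h => hne ?_
    have hαβ : α = (‖α‖ / ‖β‖) • β :=
      calc α = ‖β‖⁻¹ • (‖β‖ • α) := by rw [smul_smul, inv_mul_cancel₀ hβ0.ne', one_smul]
        _ = (‖α‖ / ‖β‖) • β := by
          rw [inner_eq_norm_mul_iff_real.1 h, smul_smul, div_eq_inv_mul]
    rcases hΦ.reduced β hβ _ (hαβ ▸ hα) with h1 | h1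
    · rw [hαβ, h1, one_smul]
    · have : 0 < ‖α‖ / ‖β‖ := by
        have := norm_pos_iff.2 (hΦ.ne_zero α hα); positivity
      linarith
  rw [real_inner_self_eq_norm_mul_norm, real_inner_self_eq_norm_mul_norm]
  nlinarith

lemma sub_mem_of_inner_pos (hΦ : IsRootSystem Φ) {α β : V} (hα : α ∈ Φ) (hβ : β ∈ Φ)
    (hne : α ≠ β) (hpos : 0 < ⟪α, β⟫) : α - β ∈ Φ := by
  have hαα : 0 < ⟪α, α⟫ := real_inner_self_pos.2 (hΦ.ne_zero α hα)
  have hββ : 0 < ⟪β, β⟫ := real_inner_self_pos.2 (hΦ.ne_zero β hβ)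
  obtain ⟨n, hn⟩ := hΦ.crystal β hβ α hα
  obtain ⟨m, hm⟩ := hΦ.crystal α hα β hβ
  have hn0 : 0 < n := by exact_mod_cast (hn ▸ div_pos (by linarith) hββ : (0 : ℝ) < n)
  have hm0 : 0 < m := by
    exact_mod_cast (hm ▸ div_pos (by rw [real_inner_comm]; linarith) hαα : (0 : ℝ) < m)
  have hnm : n * m < 4 := by
    have : (n * m : ℝ) < 4 := by
      rw [← hn, ← hm, pairing_mul_pairing, div_lt_iff₀ (by positivity)]
      nlinarith [hΦ.inner_sq_lt_of_inner_pos hα hβ hne hpos]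
    exact_mod_cast this
  have hone : n = 1 ∨ m = 1 := by
    by_contra! h
    nlinarith [show 2 ≤ n by omega, show 2 ≤ m by omega]
  rcases hone with rfl | rfl
  · simpa [hn] using hΦ.reflect_mem β hβ α hα
  · simpa [hm] using hΦ.neg_mem _ (hΦ.reflect_mem α hα β hβ)

lemma multiset_sum_mem_of_add_notMem (hΦ : IsRootSystem Φ) {T : Set V} (hTΦ : T ⊆ Φ)
    (hT : ∀ x ∈ T, ∀ y ∈ T, x + y ∉ Φ) (s : Multiset V) (hs : ∀ x ∈ s, x ∈ T)
    (hsum : s.sum ∈ Φ) : s.sum ∈ T := by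
  classical
  induction s using Multiset.strongInductionOn with
  | ih s ih =>
  obtain ⟨x, hx, hpos⟩ : ∃ x ∈ s, 0 < ⟪s.sum, x⟫ := by
    by_contra! h
    have : ⟪s.sum, s.sum⟫ ≤ 0 :=
      calc ⟪s.sum, s.sum⟫ = (s.map (⟪s.sum, ·⟫)).sum := map_multiset_sum (innerₛₗ ℝ s.sum) s
        _ ≤ (s.map fun _ => (0 : ℝ)).sum := Multiset.sum_map_le_sum_map _ _ h
        _ = 0 := by simp
    exact hΦ.ne_zero _ hsum (real_inner_self_nonpos.1 this)
  by_cases hx_eq : s.sum = x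
  · exact hx_eq ▸ hs x hx
  have hsplit := Multiset.sum_erase hx
  have hrest : (s.erase x).sum ∈ Φ := by
    have := hΦ.sub_mem_of_inner_pos hsum (hTΦ (hs x hx)) hx_eq hpos
    rwa [← hsplit, add_sub_cancel_left] at this
  have hrestT :=
    ih _ (Multiset.erase_lt.2 hx) (fun y hy => hs y (Multiset.mem_of_mem_erase hy)) hrest
  exact absurd (hsplit ▸ hsum) (hT x (hs x hx) _ hrestT)

lemma addSubmonoidClosure_inter_eq_of_add_notMem (hΦ : IsRootSystem Φ) {T : Set V}
    (hTΦ : T ⊆ Φ) (hT : ∀ x ∈ T, ∀ y ∈ T, x + y ∉ Φ) :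
    (AddSubmonoid.closure T : Set V) ∩ Φ = T := by
  refine subset_antisymm ?_ fun x hx => ⟨AddSubmonoid.subset_closure hx, hTΦ hx⟩
  rintro γ ⟨hγ, hγΦ⟩
  obtain ⟨s, hs, rfl⟩ := AddSubmonoid.exists_multiset_of_mem_closure hγ
  exact hΦ.multiset_sum_mem_of_add_notMem hTΦ hT s hs hγΦ

end IsRootSystem

namespace StronglyOrthogonal

variable {V : Type*} [NormedAddCommGroup V] [InnerProductSpace ℝ V] {Φ S : Set V}

lemma add_notMem_and_sub_notMem (hso : StronglyOrthogonal Φ S) (hΦ : IsRootSystem Φ)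
    (hSΦ : S ⊆ Φ) {a b : V} (ha : a ∈ S) (hb : b ∈ S) : a + b ∉ Φ ∧ a - b ∉ Φ := by
  rcases eq_or_ne a b with rfl | hab
  · rw [← two_smul ℝ, sub_self]
    exact ⟨hΦ.two_smul_notMem (hSΦ ha), hΦ.zero_notMem⟩
  · exact hso a ha b hb hab

lemma add_notMem_of_mem_union_neg (hso : StronglyOrthogonal Φ S) (hΦ : IsRootSystem Φ)
    (hSΦ : S ⊆ Φ) : ∀ x ∈ S ∪ -S, ∀ y ∈ S ∪ -S, x + y ∉ Φ := by
  have h {a b : V} (ha : a ∈ S) (hb : b ∈ S) := hso.add_notMem_and_sub_notMem hΦ hSΦ ha hb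
  rintro x (hx | hx) y (hy | hy)
  · exact (h hx hy).1
  · simpa using (h hx hy).2
  · rw [add_comm]
    simpa using (h hy hx).2
  · intro hxy
    refine (h hx hy).1 ?_
    rw [← neg_add]
    exact hΦ.neg_mem _ hxy

end StronglyOrthogonal

theorem stmt0_general {V : Type*} [NormedAddCommGroup V] [InnerProductSpace ℝ V]
    (Φ S : Set V) (hΦ : IsRootSystem Φ)
    (hSΦ : S ⊆ Φ) (hso : StronglyOrthogonal Φ S) :
    ((Submodule.span ℤ S : Submodule ℤ V) : Set V) ∩ Φ = S ∪ (-S) := by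
  rw [Submodule.coe_span_int_eq_addSubmonoidClosure]
  exact hΦ.addSubmonoidClosure_inter_eq_of_add_notMem (hΦ.union_neg_subset hSΦ)
    (hso.add_notMem_of_mem_union_neg hΦ hSΦ)

/-- for a strongly orthogonal subset `S` of an irreducible root system `Φ`,
the intersection of the integer span of `S` with `Φ` equals `S ∪ (-S)`. -/
theorem stmt0 {V : Type*} [NormedAddCommGroup V] [InnerProductSpace ℝ V]
    (Φ S : Set V) (hΦ : IsRootSystem Φ) (hirr : IsIrreducibleRS Φ)
    (hSΦ : S ⊆ Φ) (hso : StronglyOrthogonal Φ S) :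
    ((Submodule.span ℤ S : Submodule ℤ V) : Set V) ∩ Φ = S ∪ (-S) :=
  stmt0_general Φ S hΦ hSΦ hso
end

section
/- Let Φ be a root system of type A_{n−1} or C_n realized in ε-coordinates, let γ ∈ Φ, and let β_1, …, β_k ∈ Φ be pairwise strongly orthogonal roots with (β_i, γ) > 0 for all i. Then k ≤ 2; moreover, if k = 2 and the set {γ, β_1, β_2} contains roots of different lengths, then γ is a short root. -/
open scoped Classical RealInnerProductSpace

/-- The standard basis vector `ε_i` of `ℝ^n`. -/
noncomputable def eps (n : ℕ) (i : Fin n) : EuclideanSpace ℝ (Fin n) :=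
  EuclideanSpace.single i (1 : ℝ)

/-- The root system of type `A_{n-1}` in ε-coordinates. -/
def typeA (n : ℕ) : Set (EuclideanSpace ℝ (Fin n)) :=
  {v | ∃ i j : Fin n, i ≠ j ∧ v = eps n i - eps n j}

/-- The root system of type `C_n` in ε-coordinates. -/
def typeC (n : ℕ) : Set (EuclideanSpace ℝ (Fin n)) :=
  {v | (∃ i j : Fin n, i ≠ j ∧
         (v = eps n i - eps n j ∨ v = eps n i + eps n j ∨ v = -(eps n i + eps n j))) ∨
       (∃ i : Fin n, v = (2 : ℝ) • eps n i ∨ v = -((2 : ℝ) • eps n i))}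

section CoordSupport

variable {ι : Type*} [Fintype ι]

noncomputable def coordSupport (v : EuclideanSpace ℝ ι) : Finset ι := {u | v u ≠ 0}

lemma mem_coordSupport {v : EuclideanSpace ℝ ι} {u : ι} : u ∈ coordSupport v ↔ v u ≠ 0 := by
  simp [coordSupport]

lemma inner_eq_zero_of_disjoint_coordSupport {x y : EuclideanSpace ℝ ι}
    (h : Disjoint (coordSupport x) (coordSupport y)) : ⟪x, y⟫ = 0 := by
  rw [PiLp.inner_apply]
  refine Finset.sum_eq_zero fun u _ => ?_
  by_cases hx : x u = 0
  · simp [hx]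
  · have hy : y u = 0 := by
      by_contra hy
      exact Finset.disjoint_left.mp h (mem_coordSupport.mpr hx) (mem_coordSupport.mpr hy)
    simp [hy]

lemma card_le_card_coordSupport {κ : Type*} [Fintype κ] {β : κ → EuclideanSpace ℝ ι}
    {γ : EuclideanSpace ℝ ι}
    (hdisj : Pairwise fun i j => Disjoint (coordSupport (β i)) (coordSupport (β j)))
    (hγ : ∀ i, ⟪β i, γ⟫ ≠ 0) : Fintype.card κ ≤ (coordSupport γ).card := by
  have hmeet : ∀ i, ∃ u, u ∈ coordSupport (β i) ∧ u ∈ coordSupport γ := fun i =>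
    Finset.not_disjoint_iff.mp fun h => hγ i (inner_eq_zero_of_disjoint_coordSupport h)
  choose f hfβ hfγ using hmeet
  have hf : Function.Injective f := fun i j hij => by
    by_contra hne
    exact Finset.disjoint_left.mp (hdisj hne) (hfβ i) (hij ▸ hfβ j)
  rw [← Finset.card_univ]
  exact Finset.card_le_card_of_injOn f (fun i _ => hfγ i) hf.injOn

end CoordSupport

section Roots

variable {n : ℕ}

lemma eps_apply (i u : Fin n) : eps n i u = if u = i then 1 else 0 := by
  simp [eps]

lemma inner_eps_eps (i j : Fin n) : ⟪eps n i, eps n j⟫ = if i = j then 1 else 0 := by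
  simp [eps, EuclideanSpace.inner_single_left]

lemma coordSupport_smul_eps_add_smul_eps_subset (s t : ℝ) (i j : Fin n) :
    coordSupport (s • eps n i + t • eps n j) ⊆ {i, j} := by
  intro u hu
  rw [mem_coordSupport] at hu
  by_contra h
  simp only [Finset.mem_insert, Finset.mem_singleton, not_or] at h
  simp [eps_apply, h.1, h.2] at hu

lemma mem_typeC_iff {v : EuclideanSpace ℝ (Fin n)} :
    v ∈ typeC n ↔ ∃ (i j : Fin n) (s t : ℝ),
      (s = 1 ∨ s = -1) ∧ (t = 1 ∨ t = -1) ∧ (i = j → s = t) ∧ v = s • eps n i + t • eps n j := by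
  constructor
  · rintro (⟨i, j, hij, rfl | rfl | rfl⟩ | ⟨i, rfl | rfl⟩)
    · exact ⟨i, j, 1, -1, .inl rfl, .inr rfl, fun h => absurd h hij, by module⟩
    · exact ⟨i, j, 1, 1, .inl rfl, .inl rfl, fun _ => rfl, by module⟩
    · exact ⟨i, j, -1, -1, .inr rfl, .inr rfl, fun _ => rfl, by module⟩
    · exact ⟨i, i, 1, 1, .inl rfl, .inl rfl, fun _ => rfl, by module⟩
    · exact ⟨i, i, -1, -1, .inr rfl, .inr rfl, fun _ => rfl, by module⟩
  · rintro ⟨i, j, s, t, hs, ht, hst, rfl⟩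
    by_cases hij : i = j
    · subst hij
      rw [← hst rfl]
      rcases hs with rfl | rfl
      · exact .inr ⟨i, .inl (by module)⟩
      · exact .inr ⟨i, .inr (by module)⟩
    · rcases hs with rfl | rfl <;> rcases ht with rfl | rfl
      · exact .inl ⟨i, j, hij, .inr (.inl (by module))⟩
      · exact .inl ⟨i, j, hij, .inl (by module)⟩
      · exact .inl ⟨j, i, Ne.symm hij, .inl (by module)⟩
      · exact .inl ⟨i, j, hij, .inr (.inr (by module))⟩

lemma neg_eq_one_or_eq_neg_one {t : ℝ} (ht : t = 1 ∨ t = -1) : -t = 1 ∨ -t = -1 := by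
  rcases ht with rfl | rfl <;> norm_num

lemma smul_eps_add_smul_eps_mem_typeC_or_eq_zero {t u : ℝ} (ht : t = 1 ∨ t = -1)
    (hu : u = 1 ∨ u = -1) (j q : Fin n) :
    t • eps n j + u • eps n q ∈ typeC n ∨ t • eps n j + u • eps n q = 0 := by
  by_cases h : j = q → t = u
  · exact .inl (mem_typeC_iff.mpr ⟨j, q, t, u, ht, hu, h, rfl⟩)
  · obtain ⟨rfl, htu⟩ := Classical.not_imp.mp h
    have : u = -t := by grind
    exact .inr (by rw [this]; module)

lemma exists_eq_smul_eps_add_smul_eps_of_mem_coordSupport {v : EuclideanSpace ℝ (Fin n)}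
    (hv : v ∈ typeC n) {u : Fin n} (hu : u ∈ coordSupport v) :
    ∃ (j : Fin n) (s t : ℝ),
      (s = 1 ∨ s = -1) ∧ (t = 1 ∨ t = -1) ∧ v = s • eps n u + t • eps n j := by
  obtain ⟨i, j, s, t, hs, ht, -, rfl⟩ := mem_typeC_iff.mp hv
  rcases Finset.mem_insert.mp (coordSupport_smul_eps_add_smul_eps_subset s t i j hu) with rfl | hj
  · exact ⟨j, s, t, hs, ht, rfl⟩
  · rw [Finset.mem_singleton.mp hj]
    exact ⟨i, t, s, ht, hs, add_comm _ _⟩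

lemma mem_typeC_add_or_sub_of_not_disjoint {α α' : EuclideanSpace ℝ (Fin n)}
    (hα : α ∈ typeC n) (hα' : α' ∈ typeC n) (h : ¬Disjoint (coordSupport α) (coordSupport α')) :
    α + α' ∈ typeC n ∨ α - α' ∈ typeC n ∨ α' = α ∨ α' = -α := by
  obtain ⟨u, huα, huα'⟩ := Finset.not_disjoint_iff.mp h
  obtain ⟨j, s, t, hs, ht, rfl⟩ := exists_eq_smul_eps_add_smul_eps_of_mem_coordSupport hα huα
  obtain ⟨q, s', t', hs', ht', rfl⟩ := exists_eq_smul_eps_add_smul_eps_of_mem_coordSupport hα' huα'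
  obtain rfl | rfl : s' = s ∨ s' = -s := by grind
  · have hsub : s' • eps n u + t • eps n j - (s' • eps n u + t' • eps n q) =
        t • eps n j + (-t') • eps n q := by module
    rcases smul_eps_add_smul_eps_mem_typeC_or_eq_zero ht (neg_eq_one_or_eq_neg_one ht') j q
      with h | h <;> rw [← hsub] at h
    · exact .inr (.inl h)
    · exact .inr (.inr (.inl (sub_eq_zero.mp h).symm))
  · have hadd : s • eps n u + t • eps n j + ((-s) • eps n u + t' • eps n q) =
        t • eps n j + t' • eps n q := by module
    rcases smul_eps_add_smul_eps_mem_typeC_or_eq_zero ht ht' j q with h | h <;> rw [← hadd] at h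
    · exact .inl h
    · exact .inr (.inr (.inr (eq_neg_of_add_eq_zero_right h)))

noncomputable def allOnes (n : ℕ) : EuclideanSpace ℝ (Fin n) := WithLp.toLp 2 fun _ => 1

lemma inner_eps_allOnes (i : Fin n) : ⟪eps n i, allOnes n⟫ = 1 := by
  simp [eps, allOnes, EuclideanSpace.inner_single_left]

lemma typeA_eq : typeA n = {v ∈ typeC n | ⟪v, allOnes n⟫ = 0} := by
  ext v
  constructor
  · rintro ⟨i, j, hij, rfl⟩
    exact ⟨.inl ⟨i, j, hij, .inl rfl⟩, by simp [inner_sub_left, inner_eps_allOnes]⟩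
  · rintro ⟨hv, hv1⟩
    obtain ⟨i, j, s, t, hs, ht, hst, rfl⟩ := mem_typeC_iff.mp hv
    simp only [inner_add_left, real_inner_smul_left, inner_eps_allOnes, mul_one] at hv1
    have hij : i ≠ j := fun h => by grind
    rcases hs with rfl | rfl <;> rcases ht with rfl | rfl <;> norm_num at hv1
    · exact ⟨i, j, hij, by module⟩
    · exact ⟨j, i, hij.symm, by module⟩

lemma mem_typeA_add_or_sub_of_not_disjoint {α α' : EuclideanSpace ℝ (Fin n)}
    (hα : α ∈ typeA n) (hα' : α' ∈ typeA n) (h : ¬Disjoint (coordSupport α) (coordSupport α')) :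
    α + α' ∈ typeA n ∨ α - α' ∈ typeA n ∨ α' = α ∨ α' = -α := by
  rw [typeA_eq] at hα hα' ⊢
  obtain ⟨hαC, hα1⟩ := hα
  obtain ⟨hα'C, hα'1⟩ := hα'
  rcases mem_typeC_add_or_sub_of_not_disjoint hαC hα'C h with h | h | h | h
  · exact .inl ⟨h, by rw [inner_add_left, hα1, hα'1, add_zero]⟩
  · exact .inr (.inl ⟨h, by rw [inner_sub_left, hα1, hα'1, sub_zero]⟩)
  · exact .inr (.inr (.inl h))
  · exact .inr (.inr (.inr h))

lemma disjoint_coordSupport_of_mem {Φ : Set (EuclideanSpace ℝ (Fin n))}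
    (hΦ : Φ = typeA n ∨ Φ = typeC n) {α α' : EuclideanSpace ℝ (Fin n)} (hα : α ∈ Φ) (hα' : α' ∈ Φ)
    (hadd : α + α' ∉ Φ) (hsub : α - α' ∉ Φ) (hne : α' ≠ α) (hne' : α' ≠ -α) :
    Disjoint (coordSupport α) (coordSupport α') := by
  by_contra h
  rcases hΦ with rfl | rfl
  · rcases mem_typeA_add_or_sub_of_not_disjoint hα hα' h with h | h | h | h <;> contradiction
  · rcases mem_typeC_add_or_sub_of_not_disjoint hα hα' h with h | h | h | h <;> contradiction

lemma card_coordSupport_le_two {v : EuclideanSpace ℝ (Fin n)} (hv : v ∈ typeC n) :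
    (coordSupport v).card ≤ 2 := by
  obtain ⟨i, j, s, t, -, -, -, rfl⟩ := mem_typeC_iff.mp hv
  exact (Finset.card_le_card (coordSupport_smul_eps_add_smul_eps_subset s t i j)).trans
    Finset.card_le_two

lemma norm_sq_smul_eps_add_smul_eps {s t : ℝ} (hs : s = 1 ∨ s = -1) (ht : t = 1 ∨ t = -1)
    {i j : Fin n} (hst : i = j → s = t) :
    ‖s • eps n i + t • eps n j‖ ^ 2 = if i = j then 4 else 2 := by
  rw [← real_inner_self_eq_norm_sq]
  by_cases hij : i = j
  · subst hij
    rw [hst rfl, if_pos rfl]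
    simp only [inner_add_left, inner_add_right, real_inner_smul_left, real_inner_smul_right,
      inner_eps_eps]
    rcases ht with rfl | rfl <;> norm_num
  · simp only [inner_add_left, inner_add_right, real_inner_smul_left, real_inner_smul_right,
      inner_eps_eps, hij, Ne.symm hij, if_true, if_false]
    rcases hs with rfl | rfl <;> rcases ht with rfl | rfl <;> norm_num

lemma two_le_norm_sq_of_mem_typeC {v : EuclideanSpace ℝ (Fin n)} (hv : v ∈ typeC n) :
    2 ≤ ‖v‖ ^ 2 := by
  obtain ⟨i, j, s, t, hs, ht, hst, rfl⟩ := mem_typeC_iff.mp hv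
  rw [norm_sq_smul_eps_add_smul_eps hs ht hst]
  split_ifs <;> norm_num

lemma norm_sq_eq_two_of_two_le_card_coordSupport {v : EuclideanSpace ℝ (Fin n)}
    (hv : v ∈ typeC n) (hcard : 2 ≤ (coordSupport v).card) : ‖v‖ ^ 2 = 2 := by
  obtain ⟨i, j, s, t, hs, ht, hst, rfl⟩ := mem_typeC_iff.mp hv
  have hij : i ≠ j := by
    rintro rfl
    have := Finset.card_le_card (coordSupport_smul_eps_add_smul_eps_subset s t i i)
    rw [Finset.pair_eq_singleton, Finset.card_singleton] at this
    omega
  rw [norm_sq_smul_eps_add_smul_eps hs ht hst, if_neg hij]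

end Roots

/-- in types `A` and `C`, if `β_1, …, β_k` are pairwise strongly orthogonal roots
with `(β_i, γ) > 0` for all `i`, then `k ≤ 2`; moreover if `k = 2` and `{γ, β_1, β_2}` contains
roots of different lengths, then `γ` is a short root. -/
theorem stmt3 (n k : ℕ) (Φ : Set (EuclideanSpace ℝ (Fin n)))
    (hΦ : Φ = typeA n ∨ Φ = typeC n)
    (γ : EuclideanSpace ℝ (Fin n)) (hγ : γ ∈ Φ)
    (β : Fin k → EuclideanSpace ℝ (Fin n)) (hβ : ∀ i, β i ∈ Φ)
    (hinj : Function.Injective β)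
    (hso : ∀ i j : Fin k, i ≠ j → β i + β j ∉ Φ ∧ β i - β j ∉ Φ)
    (hpos : ∀ i, 0 < ⟪β i, γ⟫) :
    k ≤ 2 ∧ ∀ (hk : k = 2),
      ¬(‖β ⟨0, by omega⟩‖ = ‖γ‖ ∧ ‖β ⟨1, by omega⟩‖ = ‖γ‖) →
      ∀ α ∈ Φ, ‖γ‖ ≤ ‖α‖ := by
  have hΦC : Φ ⊆ typeC n := by
    rcases hΦ with rfl | rfl
    · exact typeA_eq.trans_subset fun _ hv => hv.1
    · exact subset_rfl
  have hdisj : Pairwise fun i j => Disjoint (coordSupport (β i)) (coordSupport (β j)) := by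
    intro i j hij
    refine disjoint_coordSupport_of_mem hΦ (hβ i) (hβ j) (hso i j hij).1 (hso i j hij).2
      (hinj.ne hij.symm) fun hneg => ?_
    have := hpos j
    rw [hneg, inner_neg_left] at this
    linarith [hpos i]
  have hcard : k ≤ (coordSupport γ).card := by
    simpa using card_le_card_coordSupport hdisj fun i => (hpos i).ne'
  refine ⟨hcard.trans (card_coordSupport_le_two (hΦC hγ)), fun hk _ α hα => ?_⟩
  rw [← sq_le_sq₀ (norm_nonneg γ) (norm_nonneg α),
    norm_sq_eq_two_of_two_le_card_coordSupport (hΦC hγ) (hk ▸ hcard)]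
  exact two_le_norm_sq_of_mem_typeC (hΦC hα)
end

section
/- Let S = {β_1, …, β_k} be an orthogonal subset of positive roots of a finite root system Φ, and let S_0 ⊂ S ∪ (−S) be a subset such that the product of affine reflections Π_{β∈S_0} s_{δ−β} equals Π_{β∈S} s_{δ−β} in the affine Weyl group. Then S_0 = S. -/
open scoped Classical RealInnerProductSpace

/-- A base (set of simple roots) of a root system. -/
structure IsBase {V : Type*} [NormedAddCommGroup V] [InnerProductSpace ℝ V]
    (Φ : Set V) (Δ : Finset V) : Prop where
  subset : ↑Δ ⊆ Φ
  indep : LinearIndependent ℝ (fun b : Δ => (b : V))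
  pos_or_neg : ∀ α ∈ Φ, (∃ c : V → ℕ, α = ∑ b ∈ Δ, (c b : ℝ) • b) ∨
    (∃ c : V → ℕ, -α = ∑ b ∈ Δ, (c b : ℝ) • b)

/-- The positive roots with respect to a base. -/
def PosRoots {V : Type*} [NormedAddCommGroup V] [InnerProductSpace ℝ V]
    (Φ : Set V) (Δ : Finset V) : Set V :=
  {α | α ∈ Φ ∧ ∃ c : V → ℕ, α = ∑ b ∈ Δ, (c b : ℝ) • b}

/-- `θ` is the highest root of `Φ` with respect to the base `Δ`. -/
def IsHighestRoot {V : Type*} [NormedAddCommGroup V] [InnerProductSpace ℝ V]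
    (Φ : Set V) (Δ : Finset V) (θ : V) : Prop :=
  θ ∈ Φ ∧ ∀ α ∈ Φ, ∃ c : V → ℕ, θ - α = ∑ b ∈ Δ, (c b : ℝ) • b

/-- The coroot of the real affine root `(β, n) = β + nδ`, as a linear functional on the affine
root space `V × ℝδ` (it kills `δ`). -/
noncomputable def acoroot {V : Type*} [NormedAddCommGroup V] [InnerProductSpace ℝ V]
    (β : V) : (V × ℝ) →ₗ[ℝ] ℝ :=
  (2 / ⟪β, β⟫) • ((innerSL ℝ β).toLinearMap ∘ₗ LinearMap.fst ℝ V ℝ)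

/-- The reflection of the affine Weyl group corresponding to the real affine root
`β + nδ`, acting linearly on the affine root space `V ⊕ ℝδ`. -/
noncomputable def sAff {V : Type*} [NormedAddCommGroup V] [InnerProductSpace ℝ V]
    (β : V) (n : ℝ) : Module.End ℝ (V × ℝ) :=
  LinearMap.id - LinearMap.smulRight (acoroot β) ((β, n) : V × ℝ)

/-- The set of reflections of the affine Weyl group of `Φ`. -/
def AffRefls {V : Type*} [NormedAddCommGroup V] [InnerProductSpace ℝ V]
    (Φ : Set V) : Set (Module.End ℝ (V × ℝ)) :=
  {f | ∃ β ∈ Φ, ∃ n : ℤ, f = sAff β (n : ℝ)}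

/-- The positive real affine roots `α + nδ` with `n > 0`, or `n = 0` and `α` positive. -/
def PosAffRoots {V : Type*} [NormedAddCommGroup V] [InnerProductSpace ℝ V]
    (Φ : Set V) (Δ : Finset V) : Set (V × ℝ) :=
  {p | p.1 ∈ Φ ∧ (∃ n : ℤ, p.2 = (n : ℝ)) ∧
    (0 < p.2 ∨ (p.2 = 0 ∧ p.1 ∈ PosRoots Φ Δ))}

/-- Length of an element of the affine Weyl group: the number of positive real affine roots
sent to negative ones. -/
noncomputable def affLength {V : Type*} [NormedAddCommGroup V] [InnerProductSpace ℝ V]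
    (Φ : Set V) (Δ : Finset V) (w : Module.End ℝ (V × ℝ)) : ℕ :=
  {p | p ∈ PosAffRoots Φ Δ ∧ -(w p) ∈ PosAffRoots Φ Δ}.ncard

/-- Bruhat order on the affine Weyl group: `u ≤ w` iff `w` is obtained from `u` by a chain of
right multiplications by reflections, each increasing the length. -/
def bruhatLE {V : Type*} [NormedAddCommGroup V] [InnerProductSpace ℝ V]
    (Φ : Set V) (Δ : Finset V) (u w : Module.End ℝ (V × ℝ)) : Prop :=
  Relation.ReflTransGen
    (fun a b => (∃ t ∈ AffRefls Φ, b = a * t) ∧ affLength Φ Δ a < affLength Φ Δ b) u w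

/-- Strict Bruhat order. -/
def bruhatLT {V : Type*} [NormedAddCommGroup V] [InnerProductSpace ℝ V]
    (Φ : Set V) (Δ : Finset V) (u w : Module.End ℝ (V × ℝ)) : Prop :=
  bruhatLE Φ Δ u w ∧ u ≠ w

/-- The simple affine roots `Δ ∪ {δ - θ}`, as elements of `V × ℝδ`. -/
def SimpleAffRoots {V : Type*} [NormedAddCommGroup V] [InnerProductSpace ℝ V]
    (Δ : Finset V) (θ : V) : Set (V × ℝ) :=
  (fun b => ((b, (0 : ℝ)) : V × ℝ)) '' ↑Δ ∪ {((-θ, (1 : ℝ)) : V × ℝ)}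

/-- The Richardson–Springer monoid operation `s ∘ σ` on involutions. -/
noncomputable def rsCirc {V : Type*} [NormedAddCommGroup V] [InnerProductSpace ℝ V]
    (s σ : Module.End ℝ (V × ℝ)) : Module.End ℝ (V × ℝ) :=
  if s * σ = σ * s then s * σ else s * σ * s

/-! `sAff β (-1)` is the reflection in `β - δ`, i.e. `s_{δ-β}`.

Fix `β ∈ S` and evaluate both products at `(β, 0)`. A factor `s_{δ-γ}` with `γ ⊥ β` fixes this
vector, and every element of `S ∪ -S` other than `±β` is orthogonal to `β`. So the right side gives
`s_{δ-β}(β, 0) = (-β, 2)`, while the left side gives `(β, 0)`, `(-β, 2)` or `(-β, -2)` according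
as neither `±β`, only `β` or only `-β` lies in `S₀`; both cannot, as `s_{δ-β}` and `s_{δ+β}` do
not commute. Hence `β ∈ S₀` and `-β ∉ S₀` for every `β ∈ S`, which forces `S₀ = S`. -/

namespace Finset

theorem noncommProd_smul_eq_self {ι M α : Type*} [Monoid M] [MulAction M α]
    (s : Finset ι) (f : ι → M) (comm) {a : α} (hfix : ∀ j ∈ s, f j • a = a) :
    s.noncommProd f comm • a = a :=
  (MulAction.stabilizerSubmonoid M a).noncommProd_mem s f comm hfix

theorem noncommProd_smul_eq_smul_of_mem {ι M α : Type*} [Monoid M] [MulAction M α]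
    (s : Finset ι) (f : ι → M) (comm) {i : ι} (hi : i ∈ s) {a : α}
    (hfix : ∀ j ∈ s, j ≠ i → f j • a = a) : s.noncommProd f comm • a = f i • a := by
  classical
  rw [← mul_noncommProd_erase s hi f comm, mul_smul]
  congr 1
  exact noncommProd_smul_eq_self _ _ _
    fun j hj => hfix j (mem_of_mem_erase hj) (ne_of_mem_erase hj)

end Finset

section sAff

variable {V : Type*} [NormedAddCommGroup V] [InnerProductSpace ℝ V]

theorem sAff_apply (β : V) (n : ℝ) (x : V) (t : ℝ) :
    sAff β n (x, t) = (x, t) - ((2 / ⟪β, β⟫) * ⟪β, x⟫) • ((β, n) : V × ℝ) := by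
  simp [sAff, acoroot]

theorem sAff_apply_of_inner_eq_zero {β x : V} (h : ⟪β, x⟫ = 0) (n t : ℝ) :
    sAff β n (x, t) = (x, t) := by
  simp [sAff_apply, h]

theorem sAff_apply_self {β : V} (hβ : β ≠ 0) (n t : ℝ) :
    sAff β n (β, t) = (-β, t - 2 * n) := by
  have : (2 / ⟪β, β⟫) * ⟪β, β⟫ = 2 := div_mul_cancel₀ _ (inner_self_ne_zero.mpr hβ)
  rw [sAff_apply, this, Prod.smul_mk, Prod.mk_sub_mk, two_smul]
  simp

theorem sAff_apply_neg_self {β : V} (hβ : β ≠ 0) (n t : ℝ) :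
    sAff β n (-β, t) = (β, t + 2 * n) := by
  have : (2 / ⟪β, β⟫) * ⟪β, -β⟫ = -2 := by
    rw [inner_neg_right, mul_neg, div_mul_cancel₀ _ (inner_self_ne_zero.mpr hβ)]
  rw [sAff_apply, this, Prod.smul_mk, Prod.mk_sub_mk]
  ext <;> simp [two_smul]

theorem not_commute_sAff_neg {β : V} (hβ : β ≠ 0) {n : ℝ} (hn : n ≠ 0) :
    ¬Commute (sAff β n) (sAff (-β) n) := by
  intro h
  -- in either order `(β, 0)` is sent to `β`, but with `δ`-coordinates `4n` and `-4n`
  have hβ' : -β ≠ 0 := neg_ne_zero.mpr hβ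
  have key := congrArg Prod.snd (LinearMap.congr_fun h.eq ((β, 0) : V × ℝ))
  have h₁ := sAff_apply_neg_self hβ' n 0
  have h₂ := sAff_apply_self hβ' n (0 - 2 * n)
  rw [neg_neg] at h₁ h₂
  simp only [Module.End.mul_apply, h₁, sAff_apply_self hβ, sAff_apply_neg_self hβ, h₂] at key
  exact hn (by linarith)

theorem inner_eq_zero_of_mem_union_neg {S : Finset V} (horth : OrthogonalSet (S : Set V))
    {β γ : V} (hβ : β ∈ S) (hγ : γ ∈ S ∪ S.image (fun x => -x)) (hγβ : γ ≠ β) (hγβ' : γ ≠ -β) :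
    ⟪γ, β⟫ = 0 := by
  rcases Finset.mem_union.mp hγ with hγ | hγ
  · exact horth γ hγ β hβ hγβ
  · obtain ⟨η, hη, rfl⟩ := Finset.mem_image.mp hγ
    rw [inner_neg_left, horth η hη β hβ (fun h => hγβ' (h ▸ rfl)), neg_zero]

theorem mem_and_neg_notMem_of_noncommProd_sAff_eq {S S₀ : Finset V}
    (horth : OrthogonalSet (S : Set V)) (hS₀ : S₀ ⊆ S ∪ S.image (fun x => -x))
    (hc : (S : Set V).Pairwise fun a b => Commute (sAff a (-1)) (sAff b (-1)))
    (hc₀ : (S₀ : Set V).Pairwise fun a b => Commute (sAff a (-1)) (sAff b (-1)))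
    (heq : S₀.noncommProd (fun β => sAff β (-1)) hc₀ = S.noncommProd (fun β => sAff β (-1)) hc)
    {β : V} (hβS : β ∈ S) (hβ : β ≠ 0) :
    β ∈ S₀ ∧ -β ∉ S₀ := by
  have hfix : ∀ γ ∈ S₀, γ ≠ β → γ ≠ -β → sAff γ (-1) • ((β, 0) : V × ℝ) = (β, 0) :=
    fun γ hγ hγβ hγβ' => sAff_apply_of_inner_eq_zero
      (inner_eq_zero_of_mem_union_neg horth hβS (hS₀ hγ) hγβ hγβ') _ _
  have hval : S₀.noncommProd (fun β => sAff β (-1)) hc₀ • ((β, 0) : V × ℝ) = (-β, 2) := by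
    rw [heq, Finset.noncommProd_smul_eq_smul_of_mem _ _ _ hβS
      fun γ hγ hγβ => sAff_apply_of_inner_eq_zero (horth γ hγ β hβS hγβ) _ _,
      Module.End.smul_def, sAff_apply_self hβ]
    norm_num
  by_cases hb : β ∈ S₀
  · exact ⟨hb, fun hnb => not_commute_sAff_neg hβ (by norm_num)
      (hc₀ hb hnb fun h => hβ (by linear_combination (norm := module) (2⁻¹ : ℝ) • h))⟩
  exfalso
  by_cases hnb : -β ∈ S₀
  · have hneg := sAff_apply_neg_self (neg_ne_zero.mpr hβ) (-1) 0
    rw [neg_neg] at hneg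
    rw [Finset.noncommProd_smul_eq_smul_of_mem _ _ _ hnb
      fun γ hγ hγβ' => hfix γ hγ (ne_of_mem_of_not_mem hγ hb) hγβ', Module.End.smul_def,
      hneg] at hval
    norm_num at hval
  · rw [Finset.noncommProd_smul_eq_self _ _ _
      fun γ hγ => hfix γ hγ (ne_of_mem_of_not_mem hγ hb) (ne_of_mem_of_not_mem hγ hnb)] at hval
    norm_num at hval

end sAff

theorem stmt4_general {V : Type*} [NormedAddCommGroup V] [InnerProductSpace ℝ V]
    (Φ : Set V) (hΦ : IsRootSystem Φ)
    (Δ : Finset V)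
    (S S₀ : Finset V)
    (hSpos : ↑S ⊆ PosRoots Φ Δ)
    (horth : OrthogonalSet (↑S : Set V))
    (hS₀ : S₀ ⊆ S ∪ S.image (fun x => -x))
    (hc : (↑S : Set V).Pairwise fun a b => Commute (sAff a (-1)) (sAff b (-1)))
    (hc₀ : (↑S₀ : Set V).Pairwise fun a b => Commute (sAff a (-1)) (sAff b (-1)))
    (heq : S₀.noncommProd (fun β => sAff β (-1)) hc₀ = S.noncommProd (fun β => sAff β (-1)) hc) :
    S₀ = S := by
  have key : ∀ β ∈ S, β ∈ S₀ ∧ -β ∉ S₀ := fun β hβ =>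
    mem_and_neg_notMem_of_noncommProd_sAff_eq horth hS₀ hc hc₀ heq hβ
      (hΦ.ne_zero β (hSpos hβ).1)
  refine Finset.Subset.antisymm (fun γ hγ => ?_) fun β hβ => (key β hβ).1
  rcases Finset.mem_union.mp (hS₀ hγ) with h | h
  · exact h
  · obtain ⟨β, hβ, rfl⟩ := Finset.mem_image.mp h
    exact absurd hγ (key β hβ).2

/-- if `S` is an orthogonal set of positive roots and `S₀ ⊆ S ∪ (-S)` satisfies
`∏_{β ∈ S₀} s_{δ-β} = ∏_{β ∈ S} s_{δ-β}` in the affine Weyl group, then `S₀ = S`. -/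
theorem stmt4 {V : Type*} [NormedAddCommGroup V] [InnerProductSpace ℝ V]
    (Φ : Set V) (hΦ : IsRootSystem Φ)
    (Δ : Finset V) (hΔ : IsBase Φ Δ)
    (S S₀ : Finset V)
    (hSpos : ↑S ⊆ PosRoots Φ Δ)
    (horth : OrthogonalSet (↑S : Set V))
    (hS₀ : S₀ ⊆ S ∪ S.image (fun x => -x))
    (hc : (↑S : Set V).Pairwise fun a b => Commute (sAff a (-1)) (sAff b (-1)))
    (hc₀ : (↑S₀ : Set V).Pairwise fun a b => Commute (sAff a (-1)) (sAff b (-1)))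
    (heq : S₀.noncommProd (fun β => sAff β (-1)) hc₀ = S.noncommProd (fun β => sAff β (-1)) hc) :
    S₀ = S :=
  stmt4_general Φ hΦ Δ S S₀ hSpos horth hS₀ hc hc₀ heq
end

section
/- Let Φ be a finite root system, let S ⊂ Φ be a strongly orthogonal subset with height(e_S) ≤ 3 (i.e., Σ_{β∈S} |⟨η, β^∨⟩| ≤ 3 for all η ∈ Φ), and let R ⊂ Φ be an orthogonal subset such that σ_R̂ = σ_Ŝ in the affine Weyl group, where T̂ = {β − δ : β ∈ T}. Then R = S. -/
open scoped Classical RealInnerProductSpace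

/-! The reflection `σ_T̂` sends `(v, c)` to `(v - ∑_{β ∈ T} ⟨v, β^∨⟩ β, c + ∑_{β ∈ T} ⟨v, β^∨⟩)`,
so `σ_R̂ = σ_Ŝ` says that `σ_R = σ_S` and `∑_{β ∈ R} β^∨ = ∑_{β ∈ S} β^∨`; commuting of the
reflections makes `S` orthogonal. For `x ∈ R` this gives `2x = ∑_{β ∈ S} ⟨x, β^∨⟩ β` with integer
coefficients summing to `2`, and the height bound forces them to be nonnegative. Nonnegative
expansions of orthogonal vectors have disjoint supports, so if the support of `x` contained
`β₁ ≠ β₂`, then `2β₁ = ∑_{γ ∈ R} ⟨β₁, γ^∨⟩ γ` would be a multiple of `x`, which is impossible since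
`β₁ ⊥ β₂` but `x` is not orthogonal to `β₂`. Hence `R ⊆ S`, and comparing `∑ β^∨` gives `S ⊆ R`. -/

theorem nonneg_of_sum_abs_lt_sum_add_two {ι : Type*} (s : Finset ι) (c : ι → ℝ)
    (hint : ∀ i ∈ s, ∃ n : ℤ, c i = n) (h : ∑ i ∈ s, |c i| < ∑ i ∈ s, c i + 2) :
    ∀ i ∈ s, 0 ≤ c i := by
  intro i hi
  by_contra hneg
  obtain ⟨n, hn⟩ := hint i hi
  have hle : c i ≤ -1 := by
    rw [hn] at hneg ⊢
    have : n < 0 := by exact_mod_cast not_le.1 hneg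
    exact_mod_cast Int.le_sub_one_of_lt this
  have hsingle : |c i| - c i ≤ ∑ j ∈ s, (|c j| - c j) :=
    Finset.single_le_sum (f := fun j => |c j| - c j)
      (fun j _ => sub_nonneg.2 (le_abs_self (c j))) hi
  rw [Finset.sum_sub_distrib, abs_of_neg (by linarith)] at hsingle
  linarith

namespace AffineReflection

variable {V : Type*} [NormedAddCommGroup V] [InnerProductSpace ℝ V]

theorem pairing_self {β : V} (hβ : β ≠ 0) : pairing β β = 2 := by
  have : ⟪β, β⟫ ≠ 0 := inner_self_ne_zero.2 hβ
  rw [pairing]; field_simp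

theorem pairing_sub_left (u v β : V) : pairing (u - v) β = pairing u β - pairing v β := by
  simp only [pairing, inner_sub_left]; ring

theorem pairing_smul_left (t : ℝ) (v β : V) : pairing (t • v) β = t * pairing v β := by
  simp only [pairing, real_inner_smul_left]; ring

theorem pairing_eq_zero_of_inner_eq_zero {v β : V} (h : ⟪v, β⟫ = 0) : pairing v β = 0 := by
  simp [pairing, h]

theorem inner_eq_pairing_mul {β : V} (hβ : β ≠ 0) (v : V) :
    ⟪v, β⟫ = pairing v β * ⟪β, β⟫ / 2 := by
  have : ⟪β, β⟫ ≠ 0 := inner_self_ne_zero.2 hβ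
  rw [pairing]; field_simp

theorem pairing_eq_zero_iff {v β : V} (hβ : β ≠ 0) : pairing v β = 0 ↔ ⟪v, β⟫ = 0 :=
  ⟨fun h => by rw [inner_eq_pairing_mul hβ, h]; ring, pairing_eq_zero_of_inner_eq_zero⟩

theorem sAff_apply (β : V) (n : ℝ) (p : V × ℝ) :
    sAff β n p = (p.1 - pairing p.1 β • β, p.2 - pairing p.1 β * n) := by
  ext <;> simp [sAff, acoroot, pairing, real_inner_comm β, div_mul_eq_mul_div]

theorem noncommProd_sAff_apply (T : Finset V) (hT : OrthogonalSet (↑T : Set V)) (n : ℝ)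
    (hc : (↑T : Set V).Pairwise fun a b => Commute (sAff a n) (sAff b n)) (p : V × ℝ) :
    T.noncommProd (fun β => sAff β n) hc p
      = (p.1 - ∑ β ∈ T, pairing p.1 β • β, p.2 - (∑ β ∈ T, pairing p.1 β) * n) := by
  induction T using Finset.cons_induction with
  | empty => simp
  | cons a T ha ih =>
    have hT' : OrthogonalSet (↑T : Set V) := fun x hx y hy =>
      hT x (by simp [hx]) y (by simp [hy])
    have horth : ⟪∑ β ∈ T, pairing p.1 β • β, a⟫ = 0 := by
      rw [sum_inner]
      refine Finset.sum_eq_zero fun β hβ => ?_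
      rw [real_inner_smul_left, hT β (by simp [hβ]) a (by simp) (by rintro rfl; exact ha hβ),
        mul_zero]
    rw [Finset.noncommProd_cons, Module.End.mul_apply, ih hT', sAff_apply,
      pairing_sub_left, pairing_eq_zero_of_inner_eq_zero horth, Finset.sum_cons, Finset.sum_cons]
    ext
    · simp only [sub_zero]; abel
    · simp only [sub_zero]; ring

theorem pairing_mul_pairing_sub_two_eq_zero_of_commute {a b : V} (ha : a ≠ 0) {n : ℝ}
    (hn : n ≠ 0) (h : Commute (sAff a n) (sAff b n)) : pairing a b * (pairing b a - 2) = 0 := by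
  have h2 := congrArg Prod.snd (LinearMap.congr_fun h.eq (a, 0))
  simp only [Module.End.mul_apply, sAff_apply, pairing_sub_left, pairing_smul_left,
    pairing_self ha] at h2
  have : (pairing a b * (pairing b a - 2)) * n = 0 := by linear_combination h2
  simpa [hn] using this

theorem inner_eq_zero_of_commute {a b : V} (ha : a ≠ 0) (hb : b ≠ 0) (hab : a ≠ b) {n : ℝ}
    (hn : n ≠ 0) (h : Commute (sAff a n) (sAff b n)) : ⟪a, b⟫ = 0 := by
  by_contra hab0
  have hpab : pairing a b = 2 := by
    have hba : pairing b a ≠ 0 := by rwa [Ne, pairing_eq_zero_iff ha, real_inner_comm]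
    have := pairing_mul_pairing_sub_two_eq_zero_of_commute hb hn h.symm
    simpa [hba, sub_eq_zero] using this
  have hpba : pairing b a = 2 := by
    have hab' : pairing a b ≠ 0 := by rw [hpab]; norm_num
    have := pairing_mul_pairing_sub_two_eq_zero_of_commute ha hn h
    simpa [hab', sub_eq_zero] using this
  have h1 : ⟪a, b⟫ = ⟪b, b⟫ := by rw [inner_eq_pairing_mul hb, hpab]; ring
  have h2 : ⟪b, a⟫ = ⟪a, a⟫ := by rw [inner_eq_pairing_mul ha, hpba]; ring
  have : ⟪a - b, a - b⟫ = 0 := by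
    simp only [inner_sub_left, inner_sub_right, h1, h2]; ring
  exact hab (sub_eq_zero.1 (inner_self_eq_zero.1 this))

theorem orthogonalSet_of_pairwise_commute {T : Finset V} (hT0 : (0 : V) ∉ T) {n : ℝ}
    (hn : n ≠ 0) (hc : (↑T : Set V).Pairwise fun a b => Commute (sAff a n) (sAff b n)) :
    OrthogonalSet (↑T : Set V) := fun _ ha _ hb hab =>
  inner_eq_zero_of_commute (ne_of_mem_of_not_mem ha hT0) (ne_of_mem_of_not_mem hb hT0) hab hn
    (hc ha hb hab)

theorem sum_pairing_smul_eq_and_sum_pairing_eq_of_noncommProd_eq {R S : Finset V}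
    (hR : OrthogonalSet (↑R : Set V)) (hS : OrthogonalSet (↑S : Set V)) {n : ℝ} (hn : n ≠ 0)
    (hcR : (↑R : Set V).Pairwise fun a b => Commute (sAff a n) (sAff b n))
    (hcS : (↑S : Set V).Pairwise fun a b => Commute (sAff a n) (sAff b n))
    (heq : R.noncommProd (fun β => sAff β n) hcR = S.noncommProd (fun β => sAff β n) hcS)
    (v : V) :
    ∑ γ ∈ R, pairing v γ • γ = ∑ β ∈ S, pairing v β • β ∧
      ∑ γ ∈ R, pairing v γ = ∑ β ∈ S, pairing v β := by
  have h := LinearMap.congr_fun heq (v, 0)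
  rw [noncommProd_sAff_apply R hR, noncommProd_sAff_apply S hS, Prod.mk.injEq] at h
  exact ⟨sub_right_injective h.1, by simpa [hn] using h.2⟩

theorem sum_pairing_smul_of_mem {T : Finset V} (hT : OrthogonalSet (↑T : Set V)) {α : V}
    (hα : α ∈ T) (hα0 : α ≠ 0) {M : Type*} [AddCommMonoid M] [Module ℝ M] (g : V → M) :
    ∑ β ∈ T, pairing α β • g β = (2 : ℝ) • g α := by
  rw [Finset.sum_eq_single_of_mem α hα fun β hβ hβα => by
    rw [pairing_eq_zero_of_inner_eq_zero (hT α hα β hβ (Ne.symm hβα)), zero_smul],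
    pairing_self hα0]

theorem pairing_mul_pairing_eq_zero_of_inner_eq_zero {S : Finset V} (hS0 : (0 : V) ∉ S)
    {x y : V} (hxy : ⟪x, y⟫ = 0) (hx : ∑ β ∈ S, pairing x β • β = (2 : ℝ) • x)
    (hx0 : ∀ β ∈ S, 0 ≤ pairing x β) (hy0 : ∀ β ∈ S, 0 ≤ pairing y β) :
    ∀ β ∈ S, pairing x β * pairing y β = 0 := by
  have hsum : ∑ β ∈ S, pairing x β * pairing y β * (⟪β, β⟫ / 2) = 0 := by
    have h := congrArg (⟪·, y⟫) hx
    simp only [sum_inner, real_inner_smul_left, hxy, mul_zero] at h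
    rw [← h]
    refine Finset.sum_congr rfl fun β hβ => ?_
    rw [real_inner_comm y β, inner_eq_pairing_mul (ne_of_mem_of_not_mem hβ hS0) y]
    ring
  intro β hβ
  have hterm := (Finset.sum_eq_zero_iff_of_nonneg fun β hβ =>
    mul_nonneg (mul_nonneg (hx0 β hβ) (hy0 β hβ))
      (div_nonneg real_inner_self_nonneg zero_le_two)).1 hsum β hβ
  have hβ0 : ⟪β, β⟫ / 2 ≠ 0 :=
    div_ne_zero (inner_self_ne_zero.2 (ne_of_mem_of_not_mem hβ hS0)) two_ne_zero
  exact (mul_eq_zero.1 hterm).resolve_right hβ0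

theorem sum_pairing_eq_two_of_mem {T : Finset V} (hT : OrthogonalSet (↑T : Set V)) {α : V}
    (hα : α ∈ T) (hα0 : α ≠ 0) : ∑ β ∈ T, pairing α β = 2 := by
  simpa using sum_pairing_smul_of_mem hT hα hα0 fun _ => (1 : ℝ)

theorem subset_of_sum_pairing_eq {R S : Finset V} (hR : OrthogonalSet (↑R : Set V))
    (hS : OrthogonalSet (↑S : Set V)) (hR0 : (0 : V) ∉ R) (hS0 : (0 : V) ∉ S)
    (hlin : ∀ v, ∑ γ ∈ R, pairing v γ • γ = ∑ β ∈ S, pairing v β • β)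
    (htr : ∀ v, ∑ γ ∈ R, pairing v γ = ∑ β ∈ S, pairing v β)
    (hnonneg : ∀ x ∈ R, ∀ β ∈ S, 0 ≤ pairing x β) : R ⊆ S := by
  have hexp : ∀ x ∈ R, ∑ β ∈ S, pairing x β • β = (2 : ℝ) • x := fun x hx =>
    (hlin x).symm.trans (sum_pairing_smul_of_mem hR hx (ne_of_mem_of_not_mem hx hR0) id)
  intro x hx
  have hsum : ∑ β ∈ S, pairing x β = 2 :=
    (htr x).symm.trans (sum_pairing_eq_two_of_mem hR hx (ne_of_mem_of_not_mem hx hR0))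
  obtain ⟨β₁, hβ₁, h₁⟩ := Finset.exists_ne_zero_of_sum_ne_zero (hsum ▸ two_ne_zero)
  have hβ₁0 := ne_of_mem_of_not_mem hβ₁ hS0
  suffices hsupp : ∀ β ∈ S, β ≠ β₁ → pairing x β = 0 by
    have hx₁ : pairing x β₁ = 2 := by rwa [Finset.sum_eq_single_of_mem β₁ hβ₁ hsupp] at hsum
    have h := hexp x hx
    rw [Finset.sum_eq_single_of_mem β₁ hβ₁ fun β hβ hne => by rw [hsupp β hβ hne, zero_smul],
      hx₁] at h
    rwa [← smul_right_injective V two_ne_zero h]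
  intro β₂ hβ₂ hne
  by_contra h₂
  have hβ₁R : ∀ γ ∈ R, γ ≠ x → pairing β₁ γ = 0 := by
    intro γ hγ hγx
    have h := pairing_mul_pairing_eq_zero_of_inner_eq_zero hS0
      (hR x hx γ hγ (Ne.symm hγx)) (hexp x hx) (hnonneg x hx) (hnonneg γ hγ) β₁ hβ₁
    rw [mul_eq_zero, or_iff_right h₁, pairing_eq_zero_iff hβ₁0] at h
    exact pairing_eq_zero_of_inner_eq_zero (by rw [real_inner_comm]; exact h)
  have hpar : (2 : ℝ) • β₁ = pairing β₁ x • x :=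
    calc (2 : ℝ) • β₁ = ∑ β ∈ S, pairing β₁ β • β := (sum_pairing_smul_of_mem hS hβ₁ hβ₁0 id).symm
      _ = ∑ γ ∈ R, pairing β₁ γ • γ := (hlin β₁).symm
      _ = pairing β₁ x • x := Finset.sum_eq_single_of_mem x hx fun γ hγ hγx => by
        rw [hβ₁R γ hγ hγx, zero_smul]
  have h := congrArg (⟪·, β₂⟫) hpar
  simp only [real_inner_smul_left, hS β₁ hβ₁ β₂ hβ₂ (Ne.symm hne), mul_zero] at h
  rw [pairing_eq_zero_iff (ne_of_mem_of_not_mem hβ₂ hS0)] at h₂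
  have hx₁ : ⟪β₁, x⟫ = 0 := by
    rw [← pairing_eq_zero_iff (ne_of_mem_of_not_mem hx hR0)]
    exact (mul_eq_zero.1 h.symm).resolve_right h₂
  exact h₁ (pairing_eq_zero_of_inner_eq_zero (by rw [real_inner_comm]; exact hx₁))

theorem superset_of_sum_pairing_eq {R S : Finset V} (hS : OrthogonalSet (↑S : Set V))
    (hS0 : (0 : V) ∉ S) (htr : ∀ v, ∑ γ ∈ R, pairing v γ = ∑ β ∈ S, pairing v β)
    (hRS : R ⊆ S) : S ⊆ R := by
  intro β hβ
  by_contra hβR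
  have h := htr β
  rw [sum_pairing_eq_two_of_mem hS hβ (ne_of_mem_of_not_mem hβ hS0),
    Finset.sum_eq_zero fun γ hγ => pairing_eq_zero_of_inner_eq_zero
      (hS β hβ γ (hRS hγ) fun h => hβR (h ▸ hγ))] at h
  exact two_ne_zero h.symm

end AffineReflection

open AffineReflection

theorem stmt6_general {V : Type*} [NormedAddCommGroup V] [InnerProductSpace ℝ V]
    (Φ : Set V) (hΦ : IsRootSystem Φ)
    (S R : Finset V) (hSΦ : ↑S ⊆ Φ) (hRΦ : ↑R ⊆ Φ)
    (horthR : OrthogonalSet (↑R : Set V))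
    (hheight : ∀ η ∈ Φ, ∑ β ∈ S, |pairing η β| ≤ 3)
    (hcS : (↑S : Set V).Pairwise fun a b => Commute (sAff a (-1)) (sAff b (-1)))
    (hcR : (↑R : Set V).Pairwise fun a b => Commute (sAff a (-1)) (sAff b (-1)))
    (heq : R.noncommProd (fun β => sAff β (-1)) hcR = S.noncommProd (fun β => sAff β (-1)) hcS) :
    R = S := by
  have hS0 : (0 : V) ∉ S := fun h => hΦ.ne_zero 0 (hSΦ h) rfl
  have hR0 : (0 : V) ∉ R := fun h => hΦ.ne_zero 0 (hRΦ h) rfl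
  have horthS := orthogonalSet_of_pairwise_commute hS0 (by norm_num) hcS
  have hsums := sum_pairing_smul_eq_and_sum_pairing_eq_of_noncommProd_eq horthR horthS
    (by norm_num) hcR hcS heq
  have hnonneg : ∀ x ∈ R, ∀ β ∈ S, 0 ≤ pairing x β := fun x hx =>
    nonneg_of_sum_abs_lt_sum_add_two S (pairing x)
      (fun β hβ => hΦ.crystal β (hSΦ hβ) x (hRΦ hx)) (by
        rw [← (hsums x).2, sum_pairing_eq_two_of_mem horthR hx (ne_of_mem_of_not_mem hx hR0)]
        linarith [hheight x (hRΦ hx)])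
  have hRS := subset_of_sum_pairing_eq horthR horthS hR0 hS0 (fun v => (hsums v).1)
    (fun v => (hsums v).2) hnonneg
  exact hRS.antisymm (superset_of_sum_pairing_eq horthS hS0 (fun v => (hsums v).2) hRS)

/-- if `S ⊆ Φ` is strongly orthogonal with `height(e_S) ≤ 3` and `R ⊆ Φ` is an
orthogonal subset with `σ_R̂ = σ_Ŝ` in the affine Weyl group (where `T̂ = {β - δ : β ∈ T}`),
then `R = S`. -/
theorem stmt6 {V : Type*} [NormedAddCommGroup V] [InnerProductSpace ℝ V]
    (Φ : Set V) (hΦ : IsRootSystem Φ)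
    (S R : Finset V) (hSΦ : ↑S ⊆ Φ) (hRΦ : ↑R ⊆ Φ)
    (hso : StronglyOrthogonal Φ ↑S) (horthR : OrthogonalSet (↑R : Set V))
    (hheight : ∀ η ∈ Φ, ∑ β ∈ S, |pairing η β| ≤ 3)
    (hcS : (↑S : Set V).Pairwise fun a b => Commute (sAff a (-1)) (sAff b (-1)))
    (hcR : (↑R : Set V).Pairwise fun a b => Commute (sAff a (-1)) (sAff b (-1)))
    (heq : R.noncommProd (fun β => sAff β (-1)) hcR = S.noncommProd (fun β => sAff β (-1)) hcS) :
    R = S :=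
  stmt6_general Φ hΦ S R hSΦ hRΦ horthR hheight hcS hcR heq
end

section
/- Let Φ be an irreducible finite root system with highest root θ and positive system Φ⁺, let {γ_1 > γ_2 > … > γ_r} be constructed by the cascade procedure inside a subset Ψ ⊂ Φ⁺ closed under the dominance conditions of an abelian ideal of height-2 type (γ_1 the highest root, γ_{i+1} the maximal root of Ψ orthogonal to γ_1,…,γ_i). Then for every i ≤ r, the element h_i = Σ_{j=1}^{i} γ_j^∨ is dominant, i.e., ⟨α, h_i⟩ ≥ 0 for all α ∈ Φ⁺. -/
open scoped Classical RealInnerProductSpace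

/-- for the cascade `γ_1 > γ_2 > … > γ_r` inside the set `Ψ` of roots of the
abelian ideal attached to a height-2 dominant characteristic `h`, each partial sum of coroots
`h_i = ∑_{j ≤ i} γ_j^∨` is dominant: `⟨α, h_i⟩ ≥ 0` for every positive root `α`. -/
theorem stmt9 {V : Type*} [NormedAddCommGroup V] [InnerProductSpace ℝ V]
    (Φ : Set V) (hΦ : IsRootSystem Φ) (hirr : IsIrreducibleRS Φ)
    (Δ : Finset V) (hΔ : IsBase Φ Δ) (θ : V) (hθ : IsHighestRoot Φ Δ θ)
    (h : V) (hdom : ∀ b ∈ Δ, 0 ≤ ⟪b, h⟫)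
    (hval : ∀ α ∈ PosRoots Φ Δ, ⟪α, h⟫ = 0 ∨ ⟪α, h⟫ = 1 ∨ ⟪α, h⟫ = 2)
    (hθ2 : ⟪θ, h⟫ = 2)
    (r : ℕ) (γ : Fin r → V)
    (hγΨ : ∀ i, γ i ∈ Φ ∧ ⟪γ i, h⟫ = 2)
    (hγ0 : ∀ (h0 : 0 < r), γ ⟨0, h0⟩ = θ)
    (horth : ∀ i j : Fin r, i ≠ j → ⟪γ i, γ j⟫ = 0)
    (hlong : ∀ i : Fin r, ∀ α ∈ Φ, ‖α‖ ≤ ‖γ i‖)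
    (hmaximal : ∀ i : Fin r, ∀ α ∈ Φ, ⟪α, h⟫ = 2 → (∀ j : Fin r, j < i → ⟪α, γ j⟫ = 0) →
      ∃ c : V → ℕ, γ i - α = ∑ b ∈ Δ, (c b : ℝ) • b) :
    ∀ k : ℕ, k ≤ r → ∀ α ∈ PosRoots Φ Δ,
      0 ≤ ∑ j ∈ Finset.univ.filter (fun j : Fin r => (j : ℕ) < k), pairing α (γ j) := by
  intro k hk α hα
  obtain ⟨hαΦ, cα, hcα⟩ := hα
  have hposval : ∀ c : V → ℕ, (0:ℝ) ≤ ⟪∑ b ∈ Δ, (c b : ℝ) • b, h⟫ := by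
    intro c
    rw [sum_inner]
    refine Finset.sum_nonneg fun b hb => ?_
    rw [real_inner_smul_left]
    exact mul_nonneg (Nat.cast_nonneg _) (hdom b hb)
  have hαh : 0 ≤ ⟪α, h⟫ := by rw [hcα]; exact hposval cα
  have hposroot : ∀ β ∈ Φ, 0 < ⟪β, h⟫ → β ∈ PosRoots Φ Δ := by
    intro β hβ hβh
    rcases hΔ.pos_or_neg β hβ with ⟨c, hc⟩ | ⟨c, hc⟩
    · exact ⟨hβ, c, hc⟩
    · exfalso
      have h1 := hposval c
      rw [← hc, inner_neg_left] at h1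
      linarith
  have hγsq : ∀ i : Fin r, (0:ℝ) < ⟪γ i, γ i⟫ := by
    intro i
    have hne := hΦ.ne_zero _ (hγΨ i).1
    rw [real_inner_self_eq_norm_mul_norm]
    have : 0 < ‖γ i‖ := norm_pos_iff.mpr hne
    positivity
  have hint : ∀ i : Fin r, ∃ n : ℤ, pairing α (γ i) = n := fun i =>
    hΦ.crystal _ (hγΨ i).1 _ hαΦ
  -- key step: negative pairing forces value -1, α + γ i ∈ Φ, and ⟪α, h⟫ = 0
  have key : ∀ i : Fin r, pairing α (γ i) < 0 →
      pairing α (γ i) = -1 ∧ α + γ i ∈ Φ ∧ ⟪α, h⟫ = 0 := by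
    intro i hneg
    obtain ⟨n, hn⟩ := hint i
    have hn0 : n < 0 := by exact_mod_cast hn ▸ hneg
    have h2i : 2 * ⟪α, γ i⟫ = (n : ℝ) * ⟪γ i, γ i⟫ := by
      have hh := hn
      unfold pairing at hh
      rw [div_eq_iff (ne_of_gt (hγsq i))] at hh
      linarith [hh]
    have hnm1 : n = -1 := by
      by_contra hne
      have hn2 : (n : ℝ) ≤ -2 := by exact_mod_cast (by omega : n ≤ -2)
      have hlen : ⟪α, α⟫ ≤ ⟪γ i, γ i⟫ := by
        rw [real_inner_self_eq_norm_mul_norm, real_inner_self_eq_norm_mul_norm]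
        exact mul_self_le_mul_self (norm_nonneg _) (hlong i α hαΦ)
      have hq : ⟪α + γ i, α + γ i⟫ ≤ 0 := by
        rw [real_inner_add_add_self]
        nlinarith [hγsq i]
      have hz : α + γ i = 0 :=
        inner_self_eq_zero.mp (le_antisymm hq real_inner_self_nonneg)
      have hα' : α = -γ i := eq_neg_of_add_eq_zero_left hz
      have : ⟪α, h⟫ = -2 := by rw [hα', inner_neg_left, (hγΨ i).2]
      linarith
    have hpm1 : pairing α (γ i) = -1 := by rw [hn, hnm1]; norm_num
    have hβΦ : α + γ i ∈ Φ := by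
      have hb := hΦ.reflect_mem (γ i) (hγΨ i).1 α hαΦ
      rw [hpm1, neg_one_smul, sub_neg_eq_add] at hb
      exact hb
    have hβh : ⟪α + γ i, h⟫ = ⟪α, h⟫ + 2 := by
      rw [inner_add_left, (hγΨ i).2]
    have hβpos := hposroot _ hβΦ (by rw [hβh]; linarith)
    have hα0 : ⟪α, h⟫ = 0 := by
      rcases hval _ hβpos with hv | hv | hv <;> rw [hβh] at hv <;> linarith
    exact ⟨hpm1, hβΦ, hα0⟩
  -- no two distinct indices can both have negative pairing
  have key2 : ∀ i j : Fin r, i ≠ j → pairing α (γ i) < 0 → pairing α (γ j) < 0 → False := by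
    intro i j hij hi hj
    obtain ⟨hpi, hβΦ, hαh0⟩ := key i hi
    obtain ⟨hpj, _, _⟩ := key j hj
    have hpβ : pairing (α + γ i) (γ j) = -1 := by
      unfold pairing at hpj ⊢
      rw [inner_add_left, horth i j hij, add_zero]
      exact hpj
    have hb := hΦ.reflect_mem (γ j) (hγΨ j).1 (α + γ i) hβΦ
    rw [hpβ, neg_one_smul, sub_neg_eq_add] at hb
    have hbh : ⟪α + γ i + γ j, h⟫ = 4 := by
      rw [inner_add_left, inner_add_left, hαh0, (hγΨ i).2, (hγΨ j).2]
      norm_num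
    have hbpos := hposroot _ hb (by rw [hbh]; norm_num)
    rcases hval _ hbpos with hv | hv | hv <;> rw [hbh] at hv <;> linarith
  classical
  set S := Finset.univ.filter (fun j : Fin r => (j : ℕ) < k) with hS
  by_cases hall : ∀ j ∈ S, 0 ≤ pairing α (γ j)
  · exact Finset.sum_nonneg hall
  push_neg at hall
  obtain ⟨j0, hj0S, hj0neg⟩ := hall
  set T := Finset.univ.filter (fun j : Fin r => (j : ℕ) < k ∧ pairing α (γ j) < 0) with hT
  have hTne : T.Nonempty := ⟨j0, by
    simp only [hT, Finset.mem_filter, Finset.mem_univ, true_and]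
    exact ⟨(Finset.mem_filter.mp hj0S).2, hj0neg⟩⟩
  obtain ⟨m, hmT, hmmin⟩ := T.exists_min_image id hTne
  have hmk : (m : ℕ) < k := (Finset.mem_filter.mp hmT).2.1
  have hmneg : pairing α (γ m) < 0 := (Finset.mem_filter.mp hmT).2.2
  have hmS : m ∈ S := by simp [hS, hmk]
  obtain ⟨hpm1, hβΦ, hαh0⟩ := key m hmneg
  by_cases hz : ∀ l : Fin r, l < m → ⟪α, γ l⟫ = 0
  · exfalso
    have hβh : ⟪α + γ m, h⟫ = 2 := by
      rw [inner_add_left, (hγΨ m).2, hαh0]; ring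
    have hβorth : ∀ l : Fin r, l < m → ⟪α + γ m, γ l⟫ = 0 := by
      intro l hl
      rw [inner_add_left, hz l hl, horth m l (ne_of_gt hl), zero_add]
    obtain ⟨c, hc⟩ := hmaximal m (α + γ m) hβΦ hβh hβorth
    have hcα' : -α = ∑ b ∈ Δ, (c b : ℝ) • b := by
      rw [← hc]; abel
    have hsum : ∑ b ∈ Δ, ((cα b + c b : ℕ) : ℝ) • b = 0 := by
      push_cast
      simp_rw [add_smul]
      rw [Finset.sum_add_distrib, ← hcα, ← hcα']
      abel
    have h0 : ∑ b : Δ, ((cα ↑b + c ↑b : ℕ) : ℝ) • (b : V) = 0 := by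
      rw [Finset.sum_coe_sort Δ (fun b => ((cα b + c b : ℕ) : ℝ) • b)]
      exact hsum
    have hcoef := Fintype.linearIndependent_iff.mp hΔ.indep
      (fun b : Δ => ((cα ↑b + c ↑b : ℕ) : ℝ)) h0
    have hα0 : α = 0 := by
      rw [hcα]
      refine Finset.sum_eq_zero fun b hb => ?_
      have := hcoef ⟨b, hb⟩
      simp only at this
      have hnat : cα b + c b = 0 := by exact_mod_cast this
      have hz0 : cα b = 0 := by omega
      rw [hz0]
      norm_num
    exact hΦ.ne_zero α hαΦ hα0
  push_neg at hz
  obtain ⟨l, hlm, hlne⟩ := hz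
  have hlk : (l : ℕ) < k := lt_trans hlm hmk
  have hlS : l ∈ S := by simp [hS, hlk]
  have hlpos : 0 < pairing α (γ l) := by
    rcases lt_trichotomy (pairing α (γ l)) 0 with hc | hc | hc
    · exfalso
      have hlT : l ∈ T := by
        simp only [hT, Finset.mem_filter, Finset.mem_univ, true_and]
        exact ⟨hlk, hc⟩
      exact absurd (hmmin l hlT) (not_le.mpr hlm)
    · exfalso
      apply hlne
      unfold pairing at hc
      rcases div_eq_zero_iff.mp hc with hc' | hc'
      · linarith
      · exact absurd hc' (ne_of_gt (hγsq l))
    · exact hc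
  have hl1 : 1 ≤ pairing α (γ l) := by
    obtain ⟨n, hn⟩ := hint l
    rw [hn] at hlpos ⊢
    exact_mod_cast (by exact_mod_cast hlpos : (0:ℤ) < n)
  have hnonneg : ∀ i ∈ S.erase m, 0 ≤ pairing α (γ i) := by
    intro i hi
    by_contra hneg'
    exact key2 m i (Finset.ne_of_mem_erase hi).symm hmneg (not_le.mp hneg')
  have hsplit : ∑ j ∈ S, pairing α (γ j)
      = pairing α (γ m) + ∑ j ∈ S.erase m, pairing α (γ j) :=
    (Finset.add_sum_erase S _ hmS).symm
  have hlE : l ∈ S.erase m := Finset.mem_erase.mpr ⟨ne_of_lt hlm, hlS⟩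
  have hge : pairing α (γ l) ≤ ∑ j ∈ S.erase m, pairing α (γ j) :=
    Finset.single_le_sum hnonneg hlE
  rw [hsplit, hpm1]
  linarith
end

section
/- Let h be the dominant characteristic of a nilpotent orbit of height 2 in a simple Lie algebra 𝔤, and let Ψ = {α ∈ Φ : α(h) = 2}. If S ⊂ Ψ is an orthogonal subset and β ∈ Φ is a root such that s_{δ−β} ≤ σ_Ŝ in the Bruhat order of the affine Weyl group, where Ŝ = {α − δ : α ∈ S}, then β ∈ Ψ. -/
open scoped Classical RealInnerProductSpace

section Aux12

variable {V : Type*} [NormedAddCommGroup V] [InnerProductSpace ℝ V]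

/-- Twice the evaluation of an affine root at the point `h/2` (with `δ ↦ 1`). -/
noncomputable def ffh (h : V) : (V × ℝ) →ₗ[ℝ] ℝ :=
  ((innerSL ℝ h).toLinearMap ∘ₗ LinearMap.fst ℝ V ℝ) + (2 : ℝ) • LinearMap.snd ℝ V ℝ

lemma ffh_apply (h : V) (p : V × ℝ) : ffh h p = ⟪h, p.1⟫ + 2 * p.2 := by
  simp [ffh, smul_eq_mul]

/-- The set of all real affine roots. -/
def Raff (Φ : Set V) : Set (V × ℝ) := {p | p.1 ∈ Φ ∧ ∃ m : ℤ, p.2 = (m : ℝ)}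

lemma acoroot_apply' (γ : V) (p : V × ℝ) : acoroot γ p = 2 / ⟪γ, γ⟫ * ⟪γ, p.1⟫ := by
  simp [acoroot, smul_eq_mul]

lemma acoroot_eq_pairing (γ : V) (p : V × ℝ) : acoroot γ p = pairing p.1 γ := by
  rw [acoroot_apply', pairing, real_inner_comm p.1 γ]; ring

lemma sAff_apply' (γ : V) (n : ℝ) (p : V × ℝ) :
    sAff γ n p = p - acoroot γ p • ((γ, n) : V × ℝ) := by
  simp [sAff]

lemma acoroot_self (γ : V) (hγ : γ ≠ 0) (n : ℝ) : acoroot γ ((γ, n) : V × ℝ) = 2 := by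
  have hne : ⟪γ, γ⟫ ≠ (0 : ℝ) := fun hh => hγ (inner_self_eq_zero.mp hh)
  rw [acoroot_apply']; field_simp

lemma ffh_sAff (h γ : V) (n : ℝ) (p : V × ℝ) :
    ffh h (sAff γ n p) = ffh h p - acoroot γ p * ffh h ((γ, n) : V × ℝ) := by
  rw [sAff_apply', map_sub, map_smul, smul_eq_mul]

lemma sAff_sAff (γ : V) (hγ : γ ≠ 0) (n : ℝ) (p : V × ℝ) :
    sAff γ n (sAff γ n p) = p := by
  have h1 : acoroot γ (sAff γ n p) = -acoroot γ p := by
    rw [sAff_apply', map_sub, map_smul, acoroot_self γ hγ, smul_eq_mul]; ring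
  rw [sAff_apply' γ n (sAff γ n p), h1, sAff_apply']
  module

lemma sAff_sq (γ : V) (hγ : γ ≠ 0) (n : ℝ) : sAff γ n * sAff γ n = 1 :=
  LinearMap.ext fun p => sAff_sAff γ hγ n p

lemma sAff_neg_neg (γ : V) (n : ℝ) : sAff (-γ) (-n) = sAff γ n := by
  apply LinearMap.ext; intro p
  rw [sAff_apply', sAff_apply']
  have h1 : acoroot (-γ) p = -acoroot γ p := by
    rw [acoroot_apply', acoroot_apply', inner_neg_neg, inner_neg_left]; ring
  have h2 : ((-γ, -n) : V × ℝ) = -((γ, n) : V × ℝ) := rfl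
  rw [h1, h2, smul_neg, neg_smul, neg_neg]

variable {Φ : Set V} {Δ : Finset V} {h : V}

lemma mem_posneg (hΦ : IsRootSystem Φ) (hΔ : IsBase Φ Δ) {α : V} (hα : α ∈ Φ) :
    α ∈ PosRoots Φ Δ ∨ -α ∈ PosRoots Φ Δ := by
  rcases hΔ.pos_or_neg α hα with h1 | h1
  · exact Or.inl ⟨hα, h1⟩
  · exact Or.inr ⟨hΦ.neg_mem α hα, h1⟩

lemma inner_h_bound (hΦ : IsRootSystem Φ) (hΔ : IsBase Φ Δ)
    (hval : ∀ α ∈ PosRoots Φ Δ, ⟪α, h⟫ = 0 ∨ ⟪α, h⟫ = 1 ∨ ⟪α, h⟫ = 2)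
    {α : V} (hα : α ∈ Φ) : -2 ≤ ⟪α, h⟫ ∧ ⟪α, h⟫ ≤ 2 := by
  rcases mem_posneg hΦ hΔ hα with hp | hp
  · rcases hval α hp with h1 | h1 | h1 <;> constructor <;> linarith
  · rcases hval _ hp with h1 | h1 | h1 <;> rw [inner_neg_left] at h1 <;>
      constructor <;> linarith

lemma ffh_nonneg (hΦ : IsRootSystem Φ) (hΔ : IsBase Φ Δ)
    (hval : ∀ α ∈ PosRoots Φ Δ, ⟪α, h⟫ = 0 ∨ ⟪α, h⟫ = 1 ∨ ⟪α, h⟫ = 2)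
    {p : V × ℝ} (hp : p ∈ PosAffRoots Φ Δ) : 0 ≤ ffh h p := by
  obtain ⟨hp1, ⟨m, hm⟩, hsign⟩ := hp
  rw [ffh_apply, real_inner_comm p.1 h]
  have hb := inner_h_bound hΦ hΔ hval hp1
  rcases hsign with h2 | ⟨h2, h3⟩
  · have h0 : 0 < m := by rw [hm] at h2; exact_mod_cast h2
    have h1 : (1 : ℝ) ≤ p.2 := by rw [hm]; exact_mod_cast h0
    linarith [hb.1]
  · rcases hval p.1 h3 with h4 | h4 | h4 <;> rw [h2] <;> linarith

lemma pos_subset_Raff : PosAffRoots Φ Δ ⊆ Raff Φ := fun p hp => ⟨hp.1, hp.2.1⟩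

lemma dichot_aff (hΦ : IsRootSystem Φ) (hΔ : IsBase Φ Δ) {p : V × ℝ} (hp : p ∈ Raff Φ) :
    p ∈ PosAffRoots Φ Δ ∨ -p ∈ PosAffRoots Φ Δ := by
  obtain ⟨h1, m, hm⟩ := hp
  rcases lt_trichotomy m 0 with hl | hl | hl
  · right
    refine ⟨hΦ.neg_mem _ h1, ⟨-m, by rw [Prod.snd_neg, hm]; push_cast; ring⟩, Or.inl ?_⟩
    rw [Prod.snd_neg, hm]
    have : (m : ℝ) < 0 := by exact_mod_cast hl
    linarith
  · have hz : p.2 = 0 := by rw [hm, hl]; norm_num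
    rcases mem_posneg hΦ hΔ h1 with h2 | h2
    · exact Or.inl ⟨h1, ⟨m, hm⟩, Or.inr ⟨hz, h2⟩⟩
    · right
      exact ⟨hΦ.neg_mem _ h1, ⟨-m, by rw [Prod.snd_neg, hm]; push_cast; ring⟩,
        Or.inr ⟨by rw [Prod.snd_neg, hz]; ring, h2⟩⟩
  · left
    refine ⟨h1, ⟨m, hm⟩, Or.inl ?_⟩
    rw [hm]; exact_mod_cast hl

lemma pos_of_ffh_pos (hΦ : IsRootSystem Φ) (hΔ : IsBase Φ Δ)
    (hval : ∀ α ∈ PosRoots Φ Δ, ⟪α, h⟫ = 0 ∨ ⟪α, h⟫ = 1 ∨ ⟪α, h⟫ = 2)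
    {p : V × ℝ} (hp : p ∈ Raff Φ) (hf : 0 < ffh h p) : p ∈ PosAffRoots Φ Δ := by
  rcases dichot_aff hΦ hΔ hp with h1 | h1
  · exact h1
  · exfalso
    have h2 := ffh_nonneg hΦ hΔ hval h1
    rw [map_neg] at h2; linarith

lemma neg_of_ffh_neg (hΦ : IsRootSystem Φ) (hΔ : IsBase Φ Δ)
    (hval : ∀ α ∈ PosRoots Φ Δ, ⟪α, h⟫ = 0 ∨ ⟪α, h⟫ = 1 ∨ ⟪α, h⟫ = 2)
    {p : V × ℝ} (hp : p ∈ Raff Φ) (hf : ffh h p < 0) : -p ∈ PosAffRoots Φ Δ := by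
  rcases dichot_aff hΦ hΔ hp with h1 | h1
  · exfalso
    have h2 := ffh_nonneg hΦ hΔ hval h1; linarith
  · exact h1

lemma sAff_mem_Raff (hΦ : IsRootSystem Φ) {γ : V} (hγ : γ ∈ Φ) (n : ℤ)
    {p : V × ℝ} (hp : p ∈ Raff Φ) : sAff γ ((n : ℝ)) p ∈ Raff Φ := by
  obtain ⟨h1, m, hm⟩ := hp
  obtain ⟨z, hz⟩ := hΦ.crystal γ hγ p.1 h1
  rw [sAff_apply']
  constructor
  · have hfst : (p - acoroot γ p • ((γ, (n : ℝ)) : V × ℝ)).1 = p.1 - pairing p.1 γ • γ := by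
      simp [acoroot_eq_pairing]
    rw [hfst]
    exact hΦ.reflect_mem γ hγ p.1 h1
  · refine ⟨m - z * n, ?_⟩
    have hsnd : (p - acoroot γ p • ((γ, (n : ℝ)) : V × ℝ)).2 = p.2 - (z : ℝ) * n := by
      simp [acoroot_eq_pairing, hz]
    rw [hsnd, hm]; push_cast; ring

lemma finite_slice (hfin : Φ.Finite) (K : ℤ) :
    {p : V × ℝ | p.1 ∈ Φ ∧ ∃ m : ℤ, p.2 = (m : ℝ) ∧ 0 ≤ m ∧ m ≤ K}.Finite := by
  have hsub : {p : V × ℝ | p.1 ∈ Φ ∧ ∃ m : ℤ, p.2 = (m : ℝ) ∧ 0 ≤ m ∧ m ≤ K} ⊆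
      (fun q : V × ℤ => ((q.1, (q.2 : ℝ)) : V × ℝ)) '' (Φ ×ˢ Set.Icc 0 K) := by
    rintro ⟨v, x⟩ ⟨hv, m, rfl, h0, hK⟩
    exact ⟨(v, m), ⟨hv, h0, hK⟩, rfl⟩
  exact ((hfin.prod (Set.finite_Icc _ _)).image _).subset hsub

lemma core (hΦ : IsRootSystem Φ) (hΔ : IsBase Φ Δ)
    (hval : ∀ α ∈ PosRoots Φ Δ, ⟪α, h⟫ = 0 ∨ ⟪α, h⟫ = 1 ∨ ⟪α, h⟫ = 2)
    (b : Module.End ℝ (V × ℝ))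
    (hbf : ∀ p, ffh h (b p) = ffh h p)
    (hbR : ∀ p ∈ Raff Φ, b p ∈ Raff Φ)
    {γ : V} (hγ : γ ∈ Φ) (n : ℤ)
    (hpos : ((γ, (n : ℝ)) : V × ℝ) ∈ PosAffRoots Φ Δ)
    (hcpos : 0 < ffh h ((γ, (n : ℝ)) : V × ℝ)) :
    affLength Φ Δ b ≤ affLength Φ Δ (b * sAff γ ((n : ℝ))) := by
  have hγ0 : γ ≠ 0 := hΦ.ne_zero γ hγ
  set t : Module.End ℝ (V × ℝ) := sAff γ ((n : ℝ)) with ht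
  set a : Module.End ℝ (V × ℝ) := b * t with ha
  set c : ℝ := ffh h ((γ, (n : ℝ)) : V × ℝ) with hcc
  set Nb : Set (V × ℝ) := {p | p ∈ PosAffRoots Φ Δ ∧ -(b p) ∈ PosAffRoots Φ Δ} with hNb
  set Na : Set (V × ℝ) := {p | p ∈ PosAffRoots Φ Δ ∧ -(a p) ∈ PosAffRoots Φ Δ} with hNa
  have hap : ∀ p, a p = b (t p) := fun p => Module.End.mul_apply b t p
  have hZ : ∀ p ∈ Nb, ffh h p = 0 := by
    rintro p ⟨hp, hbp⟩
    have h1 := ffh_nonneg hΦ hΔ hval hp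
    have h2 := ffh_nonneg hΦ hΔ hval hbp
    rw [map_neg, hbf] at h2; linarith
  -- finiteness of Na
  obtain ⟨B, hB⟩ := (hΦ.finite.image norm).bddAbove
  have hB' : ∀ α ∈ Φ, ‖α‖ ≤ B := fun α hα => hB (Set.mem_image_of_mem _ hα)
  have hγn : (0 : ℝ) < ‖γ‖ := norm_pos_iff.mpr hγ0
  set K : ℤ := ⌈(1 : ℝ) + B / ‖γ‖ * c⌉ with hK
  have hNa_sub : Na ⊆ {p : V × ℝ | p.1 ∈ Φ ∧ ∃ m : ℤ, p.2 = (m : ℝ) ∧ 0 ≤ m ∧ m ≤ K} := by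
    rintro p ⟨hp, hnap⟩
    obtain ⟨hp1, ⟨m, hm⟩, hsgn⟩ := hp
    refine ⟨hp1, m, hm, ?_, ?_⟩
    · rcases hsgn with h2 | ⟨h2, _⟩
      · rw [hm] at h2
        exact le_of_lt (by exact_mod_cast h2)
      · rw [hm] at h2
        exact le_of_eq (by exact_mod_cast h2.symm)
    · have hap' : ffh h (a p) ≤ 0 := by
        have h1 := ffh_nonneg hΦ hΔ hval hnap
        rw [map_neg] at h1; linarith
      have hteq : ffh h (a p) = ffh h p - acoroot γ p * c := by
        rw [hap, hbf, ffh_sAff]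
      have hk : acoroot γ p ≤ 2 * B / ‖γ‖ := by
        rw [acoroot_apply', real_inner_self_eq_norm_mul_norm]
        have h1 : ⟪γ, p.1⟫ ≤ ‖γ‖ * ‖p.1‖ := real_inner_le_norm γ p.1
        have h2 : ‖p.1‖ ≤ B := hB' p.1 hp1
        have h3 : ⟪γ, p.1⟫ ≤ ‖γ‖ * B := by nlinarith [norm_nonneg p.1]
        rw [div_mul_eq_mul_div, div_le_div_iff₀ (by positivity) hγn]
        nlinarith
      have hkc : acoroot γ p * c ≤ 2 * B / ‖γ‖ * c :=
        mul_le_mul_of_nonneg_right hk (le_of_lt hcpos)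
      have hlow : (-2 : ℝ) ≤ ⟪h, p.1⟫ := by
        rw [real_inner_comm]
        exact (inner_h_bound hΦ hΔ hval hp1).1
      have hfp : ffh h p = ⟪h, p.1⟫ + 2 * m := by rw [ffh_apply, hm]
      have hmle : (m : ℝ) ≤ 1 + B / ‖γ‖ * c := by
        have h4 : ffh h p - acoroot γ p * c ≤ 0 := by rw [← hteq]; exact hap'
        have h5 : 2 * B / ‖γ‖ * c = 2 * (B / ‖γ‖ * c) := by ring
        nlinarith
      have := hmle.trans (Int.le_ceil _)
      exact_mod_cast this
  have hNafin : Na.Finite := (finite_slice hΦ.finite K).subset hNa_sub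
  -- the injection
  set g : V × ℝ → V × ℝ := fun p => if acoroot γ p ≤ 0 then t p else p with hg
  have himg : ∀ p ∈ Nb, g p ∈ Na := by
    rintro p ⟨hp, hbp⟩
    have hfz : ffh h p = 0 := hZ p ⟨hp, hbp⟩
    have hftp : ffh h (t p) = -(acoroot γ p * c) := by rw [ht, ffh_sAff, hfz, ← hcc]; ring
    have htpR : t p ∈ Raff Φ := sAff_mem_Raff hΦ hγ n (pos_subset_Raff hp)
    by_cases hk : acoroot γ p ≤ 0
    · have hgp : g p = t p := if_pos hk
      rw [hgp]
      have htp_pos : t p ∈ PosAffRoots Φ Δ := by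
        rcases lt_or_eq_of_le hk with hk' | hk'
        · apply pos_of_ffh_pos hΦ hΔ hval htpR
          rw [hftp]; nlinarith
        · have heq : t p = p := by rw [ht, sAff_apply', hk', zero_smul, sub_zero]
          rw [heq]; exact hp
      refine ⟨htp_pos, ?_⟩
      have h1 : a (t p) = b p := by rw [hap, ht, sAff_sAff γ hγ0]
      rw [h1]; exact hbp
    · have hgp : g p = p := if_neg hk
      rw [hgp]
      push_neg at hk
      refine ⟨hp, ?_⟩
      have hftp' : ffh h (t p) < 0 := by rw [hftp]; nlinarith
      have hbtpR : b (t p) ∈ Raff Φ := hbR _ htpR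
      have hnot : b (t p) ∉ PosAffRoots Φ Δ := by
        intro hmem
        have h1 := ffh_nonneg hΦ hΔ hval hmem
        rw [hbf] at h1; linarith
      have h2 : -(b (t p)) ∈ PosAffRoots Φ Δ := by
        rcases dichot_aff hΦ hΔ hbtpR with h1 | h1
        · exact absurd h1 hnot
        · exact h1
      rw [hap]; exact h2
  have hinj : Set.InjOn g Nb := by
    rintro p₁ hp₁ p₂ hp₂ heq
    have hz₁ := hZ p₁ hp₁
    have hz₂ := hZ p₂ hp₂
    have key : ∀ q₁ q₂ : V × ℝ, ffh h q₁ = 0 → ffh h q₂ = 0 →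
        acoroot γ q₁ ≤ 0 → ¬acoroot γ q₂ ≤ 0 → t q₁ = q₂ → q₁ = q₂ := by
      intro q₁ q₂ hzq₁ hzq₂ hk₁ hk₂ heq'
      have hf2 : ffh h (t q₁) = -(acoroot γ q₁ * c) := by
        rw [ht, ffh_sAff, hzq₁, ← hcc]; ring
      rw [heq', hzq₂] at hf2
      have hk10 : acoroot γ q₁ = 0 := by
        rcases mul_eq_zero.mp (by linarith : acoroot γ q₁ * c = 0) with h1 | h1
        · exact h1
        · exact absurd h1 (ne_of_gt hcpos)
      have heq2 : t q₁ = q₁ := by rw [ht, sAff_apply', hk10, zero_smul, sub_zero]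
      rw [heq2] at heq'; exact heq'
    by_cases hk₁ : acoroot γ p₁ ≤ 0 <;> by_cases hk₂ : acoroot γ p₂ ≤ 0
    · have e1 : g p₁ = t p₁ := if_pos hk₁
      have e2 : g p₂ = t p₂ := if_pos hk₂
      rw [e1, e2] at heq
      calc p₁ = t (t p₁) := (sAff_sAff γ hγ0 _ p₁).symm
        _ = t (t p₂) := by rw [heq]
        _ = p₂ := sAff_sAff γ hγ0 _ p₂
    · have e1 : g p₁ = t p₁ := if_pos hk₁
      have e2 : g p₂ = p₂ := if_neg hk₂
      rw [e1, e2] at heq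
      exact key p₁ p₂ hz₁ hz₂ hk₁ hk₂ heq
    · have e1 : g p₁ = p₁ := if_neg hk₁
      have e2 : g p₂ = t p₂ := if_pos hk₂
      rw [e1, e2] at heq
      exact (key p₂ p₁ hz₂ hz₁ hk₂ hk₁ heq.symm).symm
    · have e1 : g p₁ = p₁ := if_neg hk₁
      have e2 : g p₂ = p₂ := if_neg hk₂
      rw [e1, e2] at heq; exact heq
  calc affLength Φ Δ b = Nb.ncard := rfl
    _ = (g '' Nb).ncard := (Set.ncard_image_of_injOn hinj).symm
    _ ≤ Na.ncard := Set.ncard_le_ncard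
        (by rintro q ⟨p, hp, rfl⟩; exact himg p hp) hNafin
    _ = affLength Φ Δ a := rfl

lemma exists_pos_rep (hΦ : IsRootSystem Φ) (hΔ : IsBase Φ Δ) {γ : V} (hγ : γ ∈ Φ) (n : ℤ) :
    ∃ γ' ∈ Φ, ∃ n' : ℤ, sAff γ' ((n' : ℝ)) = sAff γ ((n : ℝ)) ∧
      ((γ', (n' : ℝ)) : V × ℝ) ∈ PosAffRoots Φ Δ ∧
      (ffh (h := h) ((γ', (n' : ℝ)) : V × ℝ) = ffh h ((γ, (n : ℝ)) : V × ℝ) ∨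
        ffh h ((γ', (n' : ℝ)) : V × ℝ) = -ffh h ((γ, (n : ℝ)) : V × ℝ)) := by
  have hR : ((γ, (n : ℝ)) : V × ℝ) ∈ Raff Φ := ⟨hγ, n, rfl⟩
  have hcast : (((-n : ℤ) : ℝ)) = -((n : ℤ) : ℝ) := by push_cast; ring
  have hprod : ((-γ, ((-n : ℤ) : ℝ)) : V × ℝ) = -((γ, (n : ℝ)) : V × ℝ) := by
    rw [hcast]; rfl
  rcases dichot_aff hΦ hΔ hR with h1 | h1
  · exact ⟨γ, hγ, n, rfl, h1, Or.inl rfl⟩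
  · refine ⟨-γ, hΦ.neg_mem γ hγ, -n, ?_, ?_, Or.inr ?_⟩
    · rw [hcast]; exact sAff_neg_neg γ ((n : ℝ))
    · rw [hprod]; exact h1
    · rw [hprod, map_neg]

end Aux12

/-- let `h` be the dominant characteristic of a height-2 nilpotent orbit and
`Ψ = {α ∈ Φ : α(h) = 2}`. If `S ⊆ Ψ` is orthogonal and `β ∈ Φ` satisfies
`s_{δ-β} ≤ σ_Ŝ` in the Bruhat order of the affine Weyl group, then `β ∈ Ψ`. -/
theorem stmt12 {V : Type*} [NormedAddCommGroup V] [InnerProductSpace ℝ V]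
    (Φ : Set V) (hΦ : IsRootSystem Φ) (hirr : IsIrreducibleRS Φ)
    (Δ : Finset V) (hΔ : IsBase Φ Δ) (θ : V) (hθ : IsHighestRoot Φ Δ θ)
    (h : V) (hdom : ∀ b ∈ Δ, 0 ≤ ⟪b, h⟫)
    (hval : ∀ α ∈ PosRoots Φ Δ, ⟪α, h⟫ = 0 ∨ ⟪α, h⟫ = 1 ∨ ⟪α, h⟫ = 2)
    (hθ2 : ⟪θ, h⟫ = 2)
    (S : Finset V) (hSΨ : ∀ α ∈ S, α ∈ Φ ∧ ⟪α, h⟫ = 2)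
    (horth : OrthogonalSet (↑S : Set V))
    (hc : (↑S : Set V).Pairwise fun a b => Commute (sAff a (-1)) (sAff b (-1)))
    (β : V) (hβ : β ∈ Φ)
    (hbr : bruhatLE Φ Δ (sAff β (-1)) (S.noncommProd (fun α => sAff α (-1)) hc)) :
    β ∈ PosRoots Φ Δ ∧ ⟪β, h⟫ = 2 := by
  set P : Module.End ℝ (V × ℝ) → Prop :=
    fun w => (∀ p, ffh h (w p) = ffh h p) ∧ (∀ p ∈ Raff Φ, w p ∈ Raff Φ) with hP
  have hPmul : ∀ x y, P x → P y → P (x * y) := by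
    rintro x y ⟨hx1, hx2⟩ ⟨hy1, hy2⟩
    refine ⟨fun p => ?_, fun p hp => ?_⟩
    · rw [Module.End.mul_apply, hx1, hy1]
    · rw [Module.End.mul_apply]; exact hx2 _ (hy2 _ hp)
  have hP1 : P 1 := ⟨fun p => by rw [Module.End.one_apply],
    fun p hp => by rwa [Module.End.one_apply]⟩
  have hPs : ∀ α : V, α ∈ Φ → ∀ z : ℤ, ffh h ((α, (z : ℝ)) : V × ℝ) = 0 →
      P (sAff α ((z : ℝ))) := by
    intro α hα z hz
    refine ⟨fun p => ?_, fun p hp => sAff_mem_Raff hΦ hα z hp⟩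
    rw [ffh_sAff, hz]; ring
  have hPprod : P (S.noncommProd (fun α => sAff α (-1)) hc) := by
    apply Finset.noncommProd_induction S _ hc P hPmul hP1
    intro α hαS
    obtain ⟨hαΦ, hα2⟩ := hSΨ α hαS
    have hcast : (((-1 : ℤ) : ℝ)) = (-1 : ℝ) := by norm_num
    rw [← hcast]
    apply hPs α hαΦ (-1)
    rw [ffh_apply, hcast, real_inner_comm]
    simp only []
    rw [hα2]; ring
  have hPu : P (sAff β (-1)) := by
    refine Relation.ReflTransGen.head_induction_on hbr hPprod ?_
    intro x y hr _ hPy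
    obtain ⟨⟨t, ht, hyx⟩, hlen⟩ := hr
    obtain ⟨γ, hγ, n, rfl⟩ := ht
    have hγ0 : γ ≠ 0 := hΦ.ne_zero γ hγ
    have hx : x = y * sAff γ ((n : ℝ)) := by
      rw [hyx, mul_assoc, sAff_sq γ hγ0, mul_one]
    have hfz : ffh h ((γ, (n : ℝ)) : V × ℝ) = 0 := by
      by_contra hne
      obtain ⟨γ', hγ', n', hEq, hPos, hOr⟩ := exists_pos_rep (h := h) hΦ hΔ hγ n
      have hne' : ffh h ((γ', (n' : ℝ)) : V × ℝ) ≠ 0 := by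
        rcases hOr with h1 | h1 <;> rw [h1] <;> simpa using hne
      have hc' : 0 < ffh h ((γ', (n' : ℝ)) : V × ℝ) :=
        lt_of_le_of_ne (ffh_nonneg hΦ hΔ hval hPos) (Ne.symm hne')
      have hle := core hΦ hΔ hval y hPy.1 hPy.2 hγ' n' hPos hc'
      rw [hEq, ← hx] at hle
      omega
    have hPt : P (sAff γ ((n : ℝ))) := hPs γ hγ n hfz
    rw [hx]; exact hPmul _ _ hPy hPt
  obtain ⟨hfix, -⟩ := hPu
  have hβ0 : β ≠ 0 := hΦ.ne_zero β hβ
  have key : ⟪β, h⟫ = 2 := by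
    have h1 := hfix ((β, (0 : ℝ)) : V × ℝ)
    rw [ffh_sAff, acoroot_self β hβ0] at h1
    have h3 : ffh h ((β, (-1 : ℝ)) : V × ℝ) = 0 := by linarith
    rw [ffh_apply] at h3
    simp only [] at h3
    rw [real_inner_comm]
    linarith
  refine ⟨?_, key⟩
  rcases mem_posneg hΦ hΔ hβ with h1 | h1
  · exact h1
  · exfalso
    rcases hval _ h1 with h2 | h2 | h2 <;> rw [inner_neg_left, key] at h2 <;> norm_num at h2
end

section
/- Let h be the dominant characteristic of a height-2 nilpotent orbit in a simple Lie algebra with root system Φ, let Ψ = {α ∈ Φ⁺ : α(h) = 2} and Φ_L = {α ∈ Φ : α(h) = 0}. If S ⊂ Ψ is an orthogonal subset which is maximal in Ψ with respect to inclusion, then S is also maximal among orthogonal subsets of Φ⁺ ∖ Φ_L; equivalently, every root α with α(h) = 1 satisfies ⟨α, γ^∨⟩ ≠ 0 for some γ ∈ S. -/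
open scoped Classical RealInnerProductSpace

section AuxLemmas

variable {V : Type*} [NormedAddCommGroup V] [InnerProductSpace ℝ V]

private lemma rs_self_pos {Φ : Set V} (hΦ : IsRootSystem Φ) {α : V} (hα : α ∈ Φ) :
    0 < ⟪α, α⟫ := by
  rw [real_inner_self_eq_norm_sq]
  exact pow_pos (norm_pos_iff.2 (hΦ.ne_zero α hα)) 2

private lemma pairing_eq_iff {α β : V} (hβ : ⟪β, β⟫ ≠ 0) (c : ℝ) :
    pairing α β = c ↔ 2 * ⟪α, β⟫ = c * ⟪β, β⟫ := by
  unfold pairing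
  rw [div_eq_iff hβ]

private lemma sub_mem' {Φ : Set V} (hΦ : IsRootSystem Φ) {α β : V} (hα : α ∈ Φ) (hβ : β ∈ Φ)
    (hpos : 0 < ⟪α, β⟫) (hne : α ≠ β) : α - β ∈ Φ := by
  have hαα := rs_self_pos hΦ hα
  have hββ := rs_self_pos hΦ hβ
  obtain ⟨p, hp⟩ := hΦ.crystal β hβ α hα
  obtain ⟨q, hq⟩ := hΦ.crystal α hα β hβ
  have hpE : 2 * ⟪α, β⟫ = (p : ℝ) * ⟪β, β⟫ := (pairing_eq_iff (ne_of_gt hββ) _).1 hp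
  have hqE : 2 * ⟪α, β⟫ = (q : ℝ) * ⟪α, α⟫ := by
    have := (pairing_eq_iff (ne_of_gt hαα) _).1 hq
    rwa [real_inner_comm α β] at this
  have hp0 : (0:ℤ) < p := by
    by_contra hc
    push_neg at hc
    have hcr : (p:ℝ) ≤ 0 := by exact_mod_cast hc
    have : (p:ℝ) * ⟪β, β⟫ ≤ 0 := mul_nonpos_iff.2 (Or.inr ⟨hcr, hββ.le⟩)
    linarith
  have hq0 : (0:ℤ) < q := by
    by_contra hc
    push_neg at hc
    have hcr : (q:ℝ) ≤ 0 := by exact_mod_cast hc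
    have : (q:ℝ) * ⟪α, α⟫ ≤ 0 := mul_nonpos_iff.2 (Or.inr ⟨hcr, hαα.le⟩)
    linarith
  by_cases hp1 : p = 1
  · have hp' : pairing α β = (1:ℝ) := by rw [hp, hp1]; norm_num
    have := hΦ.reflect_mem β hβ α hα
    rwa [hp', one_smul] at this
  by_cases hq1 : q = 1
  · have hq' : pairing β α = (1:ℝ) := by rw [hq, hq1]; norm_num
    have h1 := hΦ.reflect_mem α hα β hβ
    rw [hq', one_smul] at h1
    have h2 := hΦ.neg_mem _ h1
    rwa [neg_sub] at h2
  · exfalso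
    have hp2 : (2:ℝ) ≤ (p:ℝ) := by exact_mod_cast (by omega : (2:ℤ) ≤ p)
    have hq2 : (2:ℝ) ≤ (q:ℝ) := by exact_mod_cast (by omega : (2:ℤ) ≤ q)
    have e1 : 2 * ⟪β, β⟫ ≤ (p:ℝ) * ⟪β, β⟫ := mul_le_mul_of_nonneg_right hp2 hββ.le
    have e2 : 2 * ⟪α, α⟫ ≤ (q:ℝ) * ⟪α, α⟫ := mul_le_mul_of_nonneg_right hq2 hαα.le
    have hexp : ⟪α - β, α - β⟫ = ⟪α, α⟫ - 2 * ⟪α, β⟫ + ⟪β, β⟫ := by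
      simp only [inner_sub_left, inner_sub_right]
      rw [real_inner_comm α β]; ring
    have h0 : ⟪α - β, α - β⟫ ≤ 0 := by rw [hexp]; linarith
    have h0' : ⟪α - β, α - β⟫ = 0 := le_antisymm h0 real_inner_self_nonneg
    exact hne (sub_eq_zero.1 (inner_self_eq_zero.1 h0'))

private lemma val_range' {Φ : Set V} (hΦ : IsRootSystem Φ) {Δ : Finset V} (hΔ : IsBase Φ Δ)
    {h : V} (hval : ∀ α ∈ PosRoots Φ Δ, ⟪α, h⟫ = 0 ∨ ⟪α, h⟫ = 1 ∨ ⟪α, h⟫ = 2)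
    {α : V} (hα : α ∈ Φ) : -2 ≤ ⟪α, h⟫ ∧ ⟪α, h⟫ ≤ 2 := by
  rcases hΔ.pos_or_neg α hα with ⟨c, hc⟩ | ⟨c, hc⟩
  · rcases hval α ⟨hα, c, hc⟩ with h' | h' | h' <;> constructor <;> linarith
  · have := hval (-α) ⟨hΦ.neg_mem α hα, c, hc⟩
    rw [inner_neg_left] at this
    rcases this with h' | h' | h' <;> constructor <;> linarith

private lemma val2_posroot {Φ : Set V} (hΦ : IsRootSystem Φ) {Δ : Finset V} (hΔ : IsBase Φ Δ)
    {h : V} (hval : ∀ α ∈ PosRoots Φ Δ, ⟪α, h⟫ = 0 ∨ ⟪α, h⟫ = 1 ∨ ⟪α, h⟫ = 2)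
    {α : V} (hα : α ∈ Φ) (h2 : ⟪α, h⟫ = 2) : α ∈ PosRoots Φ Δ := by
  rcases hΔ.pos_or_neg α hα with ⟨c, hc⟩ | ⟨c, hc⟩
  · exact ⟨hα, c, hc⟩
  · exfalso
    have := hval (-α) ⟨hΦ.neg_mem α hα, c, hc⟩
    rw [inner_neg_left, h2] at this
    rcases this with h' | h' | h' <;> norm_num at h'

private lemma inner_nonneg' {Φ : Set V} (hΦ : IsRootSystem Φ) {Δ : Finset V} (hΔ : IsBase Φ Δ)
    {h : V} (hval : ∀ α ∈ PosRoots Φ Δ, ⟪α, h⟫ = 0 ∨ ⟪α, h⟫ = 1 ∨ ⟪α, h⟫ = 2)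
    {α β : V} (hα : α ∈ Φ) (hβ : β ∈ Φ)
    (hs : 3 ≤ ⟪α, h⟫ + ⟪β, h⟫) : 0 ≤ ⟪α, β⟫ := by
  by_contra hneg
  push_neg at hneg
  have hnb : -β ∈ Φ := hΦ.neg_mem β hβ
  have hpos : 0 < ⟪α, -β⟫ := by rw [inner_neg_right]; linarith
  have hne : α ≠ -β := by
    intro e
    rw [e, inner_neg_left] at hs
    linarith
  have hmem : α - -β ∈ Φ := sub_mem' hΦ hα hnb hpos hne
  rw [sub_neg_eq_add] at hmem
  have h2 := (val_range' hΦ hΔ hval hmem).2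
  rw [inner_add_left] at h2
  linarith

private lemma exists_nonorth {h : V} {T : Finset V}
    (hsum : h = ∑ γ ∈ T, (2 / ⟪γ, γ⟫) • γ) {ν : V} (hν1 : ⟪ν, h⟫ = 1) :
    ∃ β ∈ T, ⟪ν, β⟫ ≠ 0 := by
  by_contra hc
  push_neg at hc
  have h0 : ⟪ν, h⟫ = 0 := by
    rw [hsum, inner_sum]
    refine Finset.sum_eq_zero fun δ hδ => ?_
    rw [real_inner_smul_right, hc δ hδ, mul_zero]
  rw [hν1] at h0
  exact one_ne_zero h0

end AuxLemmas

section MainLemma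

variable {V : Type*} [NormedAddCommGroup V] [InnerProductSpace ℝ V]

private lemma main_lemma {Φ : Set V} (hΦ : IsRootSystem Φ) {Δ : Finset V} (hΔ : IsBase Φ Δ)
    {h : V} (hval : ∀ α ∈ PosRoots Φ Δ, ⟪α, h⟫ = 0 ∨ ⟪α, h⟫ = 1 ∨ ⟪α, h⟫ = 2)
    {T : Finset V} (hT : ∀ α ∈ T, α ∈ PosRoots Φ Δ ∧ ⟪α, h⟫ = 2)
    (hTorth : ∀ a ∈ T, ∀ b ∈ T, a ≠ b → ⟪a, b⟫ = 0)
    (hsum : h = ∑ γ ∈ T, (2 / ⟪γ, γ⟫) • γ) :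
    ∀ n : ℕ, ∀ S₀ : Finset V, (T \ S₀).card ≤ n →
      (∀ γ ∈ S₀, γ ∈ Φ ∧ ⟪γ, h⟫ = 2) →
      (∀ γ ∈ S₀, ∀ γ' ∈ S₀, γ ≠ γ' → ⟪γ, γ'⟫ = 0) →
      (∀ ε ∈ Φ, ⟪ε, h⟫ = 2 → (∀ γ ∈ S₀, ⟪ε, γ⟫ = 0) → ε ∈ S₀) →
      ∀ ν ∈ Φ, ⟪ν, h⟫ = 1 → (∀ γ ∈ S₀, ⟪ν, γ⟫ = 0) → False := by
  intro n
  induction n with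
  | zero =>
      intro S₀ hcard hSΦ hSorth hSmax ν hν hν1 hνS
      obtain ⟨β, hβT, hβne⟩ := exists_nonorth hsum hν1
      rw [Nat.le_zero, Finset.card_eq_zero, Finset.sdiff_eq_empty_iff_subset] at hcard
      exact hβne (hνS β (hcard hβT))
  | succ n IH =>
      intro S₀ hcard hSΦ hSorth hSmax ν hν hν1 hνS
      obtain ⟨β, hβT, hβne⟩ := exists_nonorth hsum hν1
      obtain ⟨hβPos, hβ2⟩ := hT β hβT
      have hβΦ : β ∈ Φ := hβPos.1
      have hβS₀ : β ∉ S₀ := fun hmem => hβne (hνS β hmem)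
      have hνβ : 0 < ⟪ν, β⟫ :=
        lt_of_le_of_ne (inner_nonneg' hΦ hΔ hval hν hβΦ (by rw [hν1, hβ2]; norm_num))
          (Ne.symm hβne)
      have hββ : 0 < ⟪β, β⟫ := rs_self_pos hΦ hβΦ
      -- pairing ν β = 1
      have hq1 : 2 * ⟪ν, β⟫ = ⟪β, β⟫ := by
        obtain ⟨q, hq⟩ := hΦ.crystal β hβΦ ν hν
        have hqE : 2 * ⟪ν, β⟫ = (q : ℝ) * ⟪β, β⟫ := (pairing_eq_iff (ne_of_gt hββ) _).1 hq
        have hq0 : (0:ℤ) < q := by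
          by_contra hc
          push_neg at hc
          have hcr : (q:ℝ) ≤ 0 := by exact_mod_cast hc
          have : (q:ℝ) * ⟪β, β⟫ ≤ 0 := mul_nonpos_iff.2 (Or.inr ⟨hcr, hββ.le⟩)
          linarith
        by_cases hqone : q = 1
        · rw [hqone] at hqE; push_cast at hqE; linarith
        exfalso
        have hq2 : (2:ℝ) ≤ (q:ℝ) := by exact_mod_cast (by omega : (2:ℤ) ≤ q)
        have hrefl := hΦ.reflect_mem β hβΦ ν hν
        have hlow := (val_range' hΦ hΔ hval hrefl).1
        rw [inner_sub_left, real_inner_smul_left, hq, hν1, hβ2] at hlow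
        linarith
      -- find γ ∈ S₀ not orthogonal to β
      obtain ⟨γ, hγS₀, hβγne⟩ : ∃ γ ∈ S₀, ⟪β, γ⟫ ≠ 0 := by
        by_contra hc
        push_neg at hc
        exact hβS₀ (hSmax β hβΦ hβ2 hc)
      obtain ⟨hγΦ, hγ2⟩ := hSΦ γ hγS₀
      have hγγ : 0 < ⟪γ, γ⟫ := rs_self_pos hΦ hγΦ
      have hβγ : 0 < ⟪β, γ⟫ :=
        lt_of_le_of_ne (inner_nonneg' hΦ hΔ hval hβΦ hγΦ (by rw [hβ2, hγ2]; norm_num))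
          (Ne.symm hβγne)
      have hνγ : ⟪ν, γ⟫ = 0 := hνS γ hγS₀
      have hβneν : β ≠ ν := by
        intro e; rw [e, hν1] at hβ2; norm_num at hβ2
      have hβν : β - ν ∈ Φ := sub_mem' hΦ hβΦ hν (by rw [real_inner_comm ν β]; exact hνβ) hβneν
      have hβνval : ⟪β - ν, h⟫ = 1 := by rw [inner_sub_left, hβ2, hν1]; norm_num
      have hβneγ : β ≠ γ := fun e => hβS₀ (e ▸ hγS₀)
      -- β is orthogonal to S₀ \ {γ}
      have horthβ : ∀ γ' ∈ S₀, γ' ≠ γ → ⟪β, γ'⟫ = 0 := by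
        intro γ' hγ'S hne'
        obtain ⟨hγ'Φ, hγ'2⟩ := hSΦ γ' hγ'S
        have hge : 0 ≤ ⟪β, γ'⟫ :=
          inner_nonneg' hΦ hΔ hval hβΦ hγ'Φ (by rw [hβ2, hγ'2]; norm_num)
        rcases eq_or_lt_of_le hge with he | hlt
        · exact he.symm
        exfalso
        have h1 : 0 < ⟪γ', β - ν⟫ := by
          rw [inner_sub_right, real_inner_comm β γ', real_inner_comm ν γ', hνS γ' hγ'S]
          linarith
        have hne2 : γ' ≠ β - ν := by
          intro e; rw [e, hβνval] at hγ'2; norm_num at hγ'2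
        have hμ' : γ' - (β - ν) ∈ Φ := sub_mem' hΦ hγ'Φ hβν h1 hne2
        have hμ'val : ⟪γ' - (β - ν), h⟫ = 1 := by
          rw [inner_sub_left, hβνval, hγ'2]; norm_num
        have hge2 : 0 ≤ ⟪γ' - (β - ν), γ⟫ :=
          inner_nonneg' hΦ hΔ hval hμ' hγΦ (by rw [hμ'val, hγ2]; norm_num)
        have hcomp : ⟪γ' - (β - ν), γ⟫ = -⟪β, γ⟫ := by
          simp only [inner_sub_left]
          rw [hSorth γ' hγ'S γ hγS₀ hne', hνγ]; ring
        rw [hcomp] at hge2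
        linarith
      -- the two pairings between β and γ
      obtain ⟨p, hp⟩ := hΦ.crystal γ hγΦ β hβΦ
      obtain ⟨pt, hpt⟩ := hΦ.crystal β hβΦ γ hγΦ
      have hpE : 2 * ⟪β, γ⟫ = (p : ℝ) * ⟪γ, γ⟫ := (pairing_eq_iff (ne_of_gt hγγ) _).1 hp
      have hptE : 2 * ⟪β, γ⟫ = (pt : ℝ) * ⟪β, β⟫ := by
        have := (pairing_eq_iff (ne_of_gt hββ) _).1 hpt
        rwa [real_inner_comm β γ] at this
      have hp0 : (0:ℤ) < p := by
        by_contra hc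
        push_neg at hc
        have hcr : (p:ℝ) ≤ 0 := by exact_mod_cast hc
        have : (p:ℝ) * ⟪γ, γ⟫ ≤ 0 := mul_nonpos_iff.2 (Or.inr ⟨hcr, hγγ.le⟩)
        linarith
      have hpt0 : (0:ℤ) < pt := by
        by_contra hc
        push_neg at hc
        have hcr : (pt:ℝ) ≤ 0 := by exact_mod_cast hc
        have : (pt:ℝ) * ⟪β, β⟫ ≤ 0 := mul_nonpos_iff.2 (Or.inr ⟨hcr, hββ.le⟩)
        linarith
      -- p ≥ 3 impossible
      by_cases hp3 : 3 ≤ p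
      · have hp3' : (3:ℝ) ≤ (p:ℝ) := by exact_mod_cast hp3
        have hrefl := hΦ.reflect_mem γ hγΦ β hβΦ
        have hlow := (val_range' hΦ hΔ hval hrefl).1
        rw [inner_sub_left, real_inner_smul_left, hp, hβ2, hγ2] at hlow
        linarith
      -- p = 2 impossible : ζ = 2γ - β
      by_cases hp2 : p = 2
      · have hp' : pairing β γ = (2:ℝ) := by rw [hp, hp2]; norm_num
        have hrefl := hΦ.reflect_mem γ hγΦ β hβΦ
        rw [hp'] at hrefl
        have hζ : (2:ℝ) • γ - β ∈ Φ := by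
          have := hΦ.neg_mem _ hrefl
          rwa [neg_sub] at this
        have hζ2 : ⟪(2:ℝ) • γ - β, h⟫ = 2 := by
          rw [inner_sub_left, real_inner_smul_left, hγ2, hβ2]; norm_num
        have hge := inner_nonneg' hΦ hΔ hval hζ hν (by rw [hζ2, hν1]; norm_num)
        rw [inner_sub_left, real_inner_smul_left, real_inner_comm ν γ, hνγ,
          real_inner_comm ν β] at hge
        linarith
      -- so p = 1
      have hp1 : p = 1 := by omega
      have hβγE : 2 * ⟪β, γ⟫ = ⟪γ, γ⟫ := by
        rw [hp1] at hpE; push_cast at hpE; linarith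
      -- pt ≥ 3 impossible
      by_cases hpt3 : 3 ≤ pt
      · have hpt3' : (3:ℝ) ≤ (pt:ℝ) := by exact_mod_cast hpt3
        have hrefl := hΦ.reflect_mem β hβΦ γ hγΦ
        have hlow := (val_range' hΦ hΔ hval hrefl).1
        rw [inner_sub_left, real_inner_smul_left, hpt, hβ2, hγ2] at hlow
        linarith
      -- pt = 2 impossible : ε = 2β - γ would be in Ψ and ⊥ S₀
      by_cases hpt2 : pt = 2
      · have hpt' : pairing γ β = (2:ℝ) := by rw [hpt, hpt2]; norm_num
        have hrefl := hΦ.reflect_mem β hβΦ γ hγΦ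
        rw [hpt'] at hrefl
        have hε : (2:ℝ) • β - γ ∈ Φ := by
          have := hΦ.neg_mem _ hrefl
          rwa [neg_sub] at this
        have hε2 : ⟪(2:ℝ) • β - γ, h⟫ = 2 := by
          rw [inner_sub_left, real_inner_smul_left, hγ2, hβ2]; norm_num
        have hεorth : ∀ δ ∈ S₀, ⟪(2:ℝ) • β - γ, δ⟫ = 0 := by
          intro δ hδ
          rw [inner_sub_left, real_inner_smul_left]
          by_cases hδγ : δ = γ
          · rw [hδγ]
            linarith [hβγE]
          · rw [horthβ δ hδ hδγ, hSorth γ hγS₀ δ hδ (fun e => hδγ e.symm)]; ring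
        have hεS₀ := hSmax _ hε hε2 hεorth
        have := hνS _ hεS₀
        rw [inner_sub_right, real_inner_smul_right, hνγ] at this
        linarith
      -- so pt = 1 : the descent case
      have hpt1 : pt = 1 := by omega
      have hβγB : 2 * ⟪β, γ⟫ = ⟪β, β⟫ := by
        rw [hpt1] at hptE; push_cast at hptE; linarith
      have hγγB : ⟪γ, γ⟫ = ⟪β, β⟫ := by linarith
      -- τ = β - γ ∈ Φ_L
      have hτΦ : β - γ ∈ Φ := sub_mem' hΦ hβΦ hγΦ hβγ hβneγ
      have hτval : ⟪β - γ, h⟫ = 0 := by rw [inner_sub_left, hβ2, hγ2]; ring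
      have hττ : ⟪β - γ, β - γ⟫ = ⟪β, β⟫ := by
        simp only [inner_sub_left, inner_sub_right]
        rw [real_inner_comm β γ]
        linarith
      -- μ = γ - (β - ν)
      have hγβν : 0 < ⟪γ, β - ν⟫ := by
        rw [inner_sub_right, real_inner_comm β γ, real_inner_comm ν γ, hνγ]
        linarith
      have hγneβν : γ ≠ β - ν := by
        intro e; rw [e, hβνval] at hγ2; norm_num at hγ2
      have hμΦ : γ - (β - ν) ∈ Φ := sub_mem' hΦ hγΦ hβν hγβν hγneβν
      have hμval : ⟪γ - (β - ν), h⟫ = 1 := by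
        rw [inner_sub_left, hβνval, hγ2]; norm_num
      have hμβ : ⟪γ - (β - ν), β⟫ = 0 := by
        simp only [inner_sub_left]
        rw [real_inner_comm β γ]
        linarith
      have hμγ' : ∀ γ' ∈ S₀, γ' ≠ γ → ⟪γ - (β - ν), γ'⟫ = 0 := by
        intro γ' hg hne'
        simp only [inner_sub_left]
        rw [hSorth γ hγS₀ γ' hg (Ne.symm hne'), horthβ γ' hg hne', hνS γ' hg]
        ring
      -- the new set S'
      have hγT : γ ∉ T := by
        intro hγT
        exact hβγne (hTorth β hβT γ hγT hβneγ)
      have hS'Φ : ∀ δ ∈ insert β (S₀.erase γ), δ ∈ Φ ∧ ⟪δ, h⟫ = 2 := by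
        intro δ hδ
        rcases Finset.mem_insert.1 hδ with e | hδ'
        · exact e ▸ ⟨hβΦ, hβ2⟩
        · exact hSΦ δ (Finset.mem_of_mem_erase hδ')
      have hS'orth : ∀ δ ∈ insert β (S₀.erase γ), ∀ δ' ∈ insert β (S₀.erase γ),
          δ ≠ δ' → ⟪δ, δ'⟫ = 0 := by
        intro δ hδ δ' hδ' hne'
        rcases Finset.mem_insert.1 hδ with e | hδ1 <;> rcases Finset.mem_insert.1 hδ' with e' | hδ1'
        · exact absurd (e.trans e'.symm) hne'
        · rw [e]
          exact horthβ δ' (Finset.mem_of_mem_erase hδ1') (Finset.ne_of_mem_erase hδ1')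
        · rw [e', real_inner_comm β δ]
          exact horthβ δ (Finset.mem_of_mem_erase hδ1) (Finset.ne_of_mem_erase hδ1)
        · exact hSorth δ (Finset.mem_of_mem_erase hδ1) δ' (Finset.mem_of_mem_erase hδ1') hne'
      -- maximality of S'
      have hS'max : ∀ ε ∈ Φ, ⟪ε, h⟫ = 2 → (∀ δ ∈ insert β (S₀.erase γ), ⟪ε, δ⟫ = 0) →
          ε ∈ insert β (S₀.erase γ) := by
        intro ε hεΦ hε2 hεS'
        have hεβ : ⟪ε, β⟫ = 0 := hεS' β (Finset.mem_insert_self _ _)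
        have hεγ'0 : ∀ γ' ∈ S₀, γ' ≠ γ → ⟪ε, γ'⟫ = 0 := fun γ' hg hne' =>
          hεS' γ' (Finset.mem_insert_of_mem (Finset.mem_erase.2 ⟨hne', hg⟩))
        have hετ : ⟪ε, β - γ⟫ = -⟪ε, γ⟫ := by rw [inner_sub_right, hεβ]; ring
        have hcB : pairing ε (β - γ) * ⟪β, β⟫ = -2 * ⟪ε, γ⟫ := by
          unfold pairing
          rw [hττ, hετ]
          field_simp
        have hε' := hΦ.reflect_mem (β - γ) hτΦ ε hεΦ
        have hε'2 : ⟪ε - pairing ε (β - γ) • (β - γ), h⟫ = 2 := by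
          rw [inner_sub_left, real_inner_smul_left, hτval, hε2]; ring
        have hε'S₀ : ∀ δ ∈ S₀, ⟪ε - pairing ε (β - γ) • (β - γ), δ⟫ = 0 := by
          intro δ hδ
          by_cases hδγ : δ = γ
          · rw [hδγ, inner_sub_left, real_inner_smul_left]
            have h1 : ⟪β - γ, γ⟫ = -(⟪β, β⟫ / 2) := by
              rw [inner_sub_left]; linarith
            rw [h1]
            have h2 : pairing ε (β - γ) * -(⟪β, β⟫ / 2) = ⟪ε, γ⟫ := by
              have h3 : pairing ε (β - γ) * -(⟪β, β⟫ / 2) =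
                  -(pairing ε (β - γ) * ⟪β, β⟫) / 2 := by ring
              rw [h3, hcB]; ring
            rw [h2]; ring
          · rw [inner_sub_left, real_inner_smul_left]
            have h1 : ⟪β - γ, δ⟫ = 0 := by
              rw [inner_sub_left, horthβ δ hδ hδγ, hSorth γ hγS₀ δ hδ (fun e => hδγ e.symm)]
              ring
            rw [h1, hεγ'0 δ hδ hδγ]; ring
        have hε'S : ε - pairing ε (β - γ) • (β - γ) ∈ S₀ := hSmax _ hε' hε'2 hε'S₀
        have hε'neγ : ε - pairing ε (β - γ) • (β - γ) ≠ γ := by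
          intro e
          have := hε'S₀ γ hγS₀
          rw [e] at this
          linarith
        have h1 : ⟪ε - pairing ε (β - γ) • (β - γ), β⟫ = 0 := by
          rw [real_inner_comm β]
          exact horthβ _ hε'S hε'neγ
        have hε'τ : ⟪ε - pairing ε (β - γ) • (β - γ), β - γ⟫ = 0 := by
          rw [inner_sub_right, h1, hε'S₀ γ hγS₀]; ring
        rw [inner_sub_left, real_inner_smul_left, hετ, hττ] at hε'τ
        have hεγ0 : ⟪ε, γ⟫ = 0 := by linarith
        have hc0 : pairing ε (β - γ) * ⟪β, β⟫ = 0 := by linarith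
        have hc00 : pairing ε (β - γ) = 0 := by
          rcases mul_eq_zero.1 hc0 with h' | h'
          · exact h'
          · exact absurd h' (ne_of_gt hββ)
        rw [hc00, zero_smul, sub_zero] at hε'S
        have hεneγ : ε ≠ γ := by
          intro e; rw [e] at hεγ0; linarith
        exact Finset.mem_insert_of_mem (Finset.mem_erase.2 ⟨hεneγ, hε'S⟩)
      -- cardinality decreases
      have hsub : T \ insert β (S₀.erase γ) ⊆ (T \ S₀).erase β := by
        intro x hx
        obtain ⟨hxT, hxS'⟩ := Finset.mem_sdiff.1 hx
        refine Finset.mem_erase.2 ⟨?_, Finset.mem_sdiff.2 ⟨hxT, ?_⟩⟩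
        · intro e
          exact hxS' (by rw [e]; exact Finset.mem_insert_self β _)
        · intro hxS₀
          refine hxS' (Finset.mem_insert_of_mem (Finset.mem_erase.2 ⟨?_, hxS₀⟩))
          intro e; exact hγT (e ▸ hxT)
      have hcard' : (T \ insert β (S₀.erase γ)).card ≤ n := by
        have h1 := Finset.card_le_card hsub
        have h2 : β ∈ T \ S₀ := Finset.mem_sdiff.2 ⟨hβT, hβS₀⟩
        rw [Finset.card_erase_of_mem h2] at h1
        have h3 : 1 ≤ (T \ S₀).card := Finset.card_pos.2 ⟨β, h2⟩
        omega
      -- μ ⊥ S'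
      have hμS' : ∀ δ ∈ insert β (S₀.erase γ), ⟪γ - (β - ν), δ⟫ = 0 := by
        intro δ hδ
        rcases Finset.mem_insert.1 hδ with e | hδ'
        · rw [e]; exact hμβ
        · exact hμγ' δ (Finset.mem_of_mem_erase hδ') (Finset.ne_of_mem_erase hδ')
      exact IH _ hcard' hS'Φ hS'orth hS'max _ hμΦ hμval hμS'

end MainLemma

theorem stmt14' {V : Type*} [NormedAddCommGroup V] [InnerProductSpace ℝ V]
    (Φ : Set V) (hΦ : IsRootSystem Φ)
    (Δ : Finset V) (hΔ : IsBase Φ Δ)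
    (h : V)
    (hval : ∀ α ∈ PosRoots Φ Δ, ⟪α, h⟫ = 0 ∨ ⟪α, h⟫ = 1 ∨ ⟪α, h⟫ = 2)
    (hchar : ∃ T : Finset V, (∀ α ∈ T, α ∈ PosRoots Φ Δ ∧ ⟪α, h⟫ = 2) ∧
      (∀ a ∈ (↑T : Set V), ∀ b ∈ (↑T : Set V), a ≠ b → ⟪a, b⟫ = 0) ∧
      h = ∑ γ ∈ T, (2 / ⟪γ, γ⟫) • γ)
    (S : Finset V) (hSΨ : ∀ α ∈ S, α ∈ PosRoots Φ Δ ∧ ⟪α, h⟫ = 2)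
    (horth : ∀ a ∈ (↑S : Set V), ∀ b ∈ (↑S : Set V), a ≠ b → ⟪a, b⟫ = 0)
    (hmax : ∀ T : Finset V, S ⊆ T → (∀ α ∈ T, α ∈ PosRoots Φ Δ ∧ ⟪α, h⟫ = 2) →
      (∀ a ∈ (↑T : Set V), ∀ b ∈ (↑T : Set V), a ≠ b → ⟪a, b⟫ = 0) → T = S) :
    (∀ T : Finset V, S ⊆ T → (∀ α ∈ T, α ∈ PosRoots Φ Δ ∧ ⟪α, h⟫ ≠ 0) →
      (∀ a ∈ (↑T : Set V), ∀ b ∈ (↑T : Set V), a ≠ b → ⟪a, b⟫ = 0) → T = S) ∧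
    (∀ α ∈ Φ, ⟪α, h⟫ = 1 → ∃ γ ∈ S, pairing α γ ≠ 0) := by
  obtain ⟨T, hTprops, hTorth, hTsum⟩ := hchar
  have hTorth' : ∀ a ∈ T, ∀ b ∈ T, a ≠ b → ⟪a, b⟫ = 0 := fun a ha b hb =>
    hTorth a (Finset.mem_coe.2 ha) b (Finset.mem_coe.2 hb)
  have hSΦ : ∀ γ ∈ S, γ ∈ Φ ∧ ⟪γ, h⟫ = 2 := fun γ hγ => ⟨(hSΨ γ hγ).1.1, (hSΨ γ hγ).2⟩
  have hSorth : ∀ γ ∈ S, ∀ γ' ∈ S, γ ≠ γ' → ⟪γ, γ'⟫ = 0 := fun γ hγ γ' hγ' =>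
    horth γ (Finset.mem_coe.2 hγ) γ' (Finset.mem_coe.2 hγ')
  have hSmax' : ∀ ε ∈ Φ, ⟪ε, h⟫ = 2 → (∀ γ ∈ S, ⟪ε, γ⟫ = 0) → ε ∈ S := by
    intro ε hεΦ hε2 hεS
    have hεPos : ε ∈ PosRoots Φ Δ := val2_posroot hΦ hΔ hval hεΦ hε2
    have heq : insert ε S = S := by
      refine hmax (insert ε S) (Finset.subset_insert _ _) ?_ ?_
      · intro α hα
        rcases Finset.mem_insert.1 hα with e | hα'
        · exact e ▸ ⟨hεPos, hε2⟩
        · exact hSΨ α hα'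
      · intro a ha b hb hne
        rw [Finset.coe_insert, Set.mem_insert_iff] at ha hb
        rcases ha with e | ha' <;> rcases hb with e' | hb'
        · exact absurd (e.trans e'.symm) hne
        · rw [e]; exact hεS b (Finset.mem_coe.1 hb')
        · rw [e', real_inner_comm ε a]
          exact hεS a (Finset.mem_coe.1 ha')
        · exact hSorth a (Finset.mem_coe.1 ha') b (Finset.mem_coe.1 hb') hne
    rw [← heq]
    exact Finset.mem_insert_self _ _
  have key : ∀ α ∈ Φ, ⟪α, h⟫ = 1 → ∃ γ ∈ S, pairing α γ ≠ 0 := by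
    intro α hα h1
    by_contra hc
    push_neg at hc
    have hc' : ∀ γ ∈ S, ⟪α, γ⟫ = 0 := by
      intro γ hγ
      have hγΦ := (hSΦ γ hγ).1
      have h0 := hc γ hγ
      unfold pairing at h0
      rcases div_eq_zero_iff.1 h0 with h' | h'
      · linarith
      · exact absurd h' (ne_of_gt (rs_self_pos hΦ hγΦ))
    exact main_lemma hΦ hΔ hval hTprops hTorth' hTsum (T \ S).card S le_rfl hSΦ hSorth hSmax'
      α hα h1 hc'
  refine ⟨?_, key⟩
  intro T' hST' hT'props hT'orth
  refine Finset.Subset.antisymm ?_ hST'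
  intro δ hδT'
  by_contra hδS
  have hδPos := (hT'props δ hδT').1
  have hδΦ : δ ∈ Φ := hδPos.1
  have hδorthS : ∀ γ ∈ S, ⟪δ, γ⟫ = 0 := by
    intro γ hγ
    exact hT'orth δ (Finset.mem_coe.2 hδT') γ (Finset.mem_coe.2 (hST' hγ))
      (fun e => hδS (e ▸ hγ))
  rcases hval δ hδPos with h0 | h1 | h2
  · exact (hT'props δ hδT').2 h0
  · obtain ⟨γ, hγ, hpne⟩ := key δ hδΦ h1
    apply hpne
    unfold pairing
    rw [hδorthS γ hγ]
    simp
  · exact hδS (hSmax' δ hδΦ h2 hδorthS)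

/-- let `h` be the dominant characteristic of a height-2 nilpotent orbit
(encoded by `h = ∑_{γ ∈ T} γ^∨` for an orthogonal subset `T` of `Ψ`), let
`Ψ = {α ∈ Φ⁺ : α(h) = 2}` and `Φ_L = {α : α(h) = 0}`. If `S ⊆ Ψ` is a maximal orthogonal
subset of `Ψ`, then `S` is maximal among orthogonal subsets of `Φ⁺ ∖ Φ_L`; equivalently,
every root `α` with `α(h) = 1` satisfies `⟨α, γ^∨⟩ ≠ 0` for some `γ ∈ S`. -/
theorem stmt14 {V : Type*} [NormedAddCommGroup V] [InnerProductSpace ℝ V]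
    (Φ : Set V) (hΦ : IsRootSystem Φ) (hirr : IsIrreducibleRS Φ)
    (Δ : Finset V) (hΔ : IsBase Φ Δ) (θ : V) (hθ : IsHighestRoot Φ Δ θ)
    (h : V) (hdom : ∀ b ∈ Δ, 0 ≤ ⟪b, h⟫)
    (hval : ∀ α ∈ PosRoots Φ Δ, ⟪α, h⟫ = 0 ∨ ⟪α, h⟫ = 1 ∨ ⟪α, h⟫ = 2)
    (hθ2 : ⟪θ, h⟫ = 2)
    (hchar : ∃ T : Finset V, (∀ α ∈ T, α ∈ PosRoots Φ Δ ∧ ⟪α, h⟫ = 2) ∧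
      OrthogonalSet (↑T : Set V) ∧ h = ∑ γ ∈ T, (2 / ⟪γ, γ⟫) • γ)
    (S : Finset V) (hSΨ : ∀ α ∈ S, α ∈ PosRoots Φ Δ ∧ ⟪α, h⟫ = 2)
    (horth : OrthogonalSet (↑S : Set V))
    (hmax : ∀ T : Finset V, S ⊆ T → (∀ α ∈ T, α ∈ PosRoots Φ Δ ∧ ⟪α, h⟫ = 2) →
      OrthogonalSet (↑T : Set V) → T = S) :
    (∀ T : Finset V, S ⊆ T → (∀ α ∈ T, α ∈ PosRoots Φ Δ ∧ ⟪α, h⟫ ≠ 0) →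
      OrthogonalSet (↑T : Set V) → T = S) ∧
    (∀ α ∈ Φ, ⟪α, h⟫ = 1 → ∃ γ ∈ S, pairing α γ ≠ 0) := by
  obtain ⟨T, hTprops, hTorth, hTsum⟩ := hchar
  have hTorth' : ∀ a ∈ (↑T : Set V), ∀ b ∈ (↑T : Set V), a ≠ b → ⟪a, b⟫ = 0 := hTorth
  have horth' : ∀ a ∈ (↑S : Set V), ∀ b ∈ (↑S : Set V), a ≠ b → ⟪a, b⟫ = 0 := horth
  have hmax' : ∀ T' : Finset V, S ⊆ T' → (∀ α ∈ T', α ∈ PosRoots Φ Δ ∧ ⟪α, h⟫ = 2) →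
      (∀ a ∈ (↑T' : Set V), ∀ b ∈ (↑T' : Set V), a ≠ b → ⟪a, b⟫ = 0) → T' = S :=
    fun T' h1 h2 h3 => hmax T' h1 h2 h3
  obtain ⟨c1, c2⟩ := stmt14' Φ hΦ Δ hΔ h hval ⟨T, hTprops, hTorth', hTsum⟩ S hSΨ horth' hmax'
  exact ⟨fun T' h1 h2 h3 => c1 T' h1 h2 h3, c2⟩
end
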